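/- arXiv:1005.5090 — 6 statements merged into one kernel-verified Lean document; each statement's English description precedes it below -/
import Mathlib

section
/- Let n ≥ 2 and let Q ⊆ ℝⁿ be a real quadric surface. Then the complement ℝⁿ \ Q has at most four connected components. -/
/-! Write `f = Q + ℓ + c` with `Q` a quadratic form. If `Q ≤ 0`, then `f` is concave along
every line and `{f > 0}` is convex. Otherwise take `v` with `Q v > 0`: along each line in
direction `v`, `f` is an upward parabola, so from every point of `{f > 0}` one of the two rays
in directions `±v` stays in `{f > 0}`; and any two points whose `v`-rays stay in `{f > 0}` are
joined far out along `v`, where the term `t ^ 2 * Q v` dominates. So `{f > 0}` has at most two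
components, as has `{f < 0} = {-f > 0}`, and `{f ≠ 0}` at most four. -/

open Set Metric RealInnerProductSpace

noncomputable section

/-- Euclidean n-space. -/
abbrev En (n : ℕ) := EuclideanSpace ℝ (Fin n)

/-- A quadric surface in ℝⁿ: the zero set of a quadratic polynomial whose quadratic
part (given by a symmetric matrix) is not identically zero. -/
def IsQuadricSurface {n : ℕ} (Q : Set (En n)) : Prop :=
  ∃ (a : Matrix (Fin n) (Fin n) ℝ) (b : Fin n → ℝ) (c : ℝ),
    a.IsSymm ∧ a ≠ 0 ∧
    Q = {x : En n | (∑ i, ∑ k, a i k * x i * x k) + 2 * (∑ i, b i * x i) + c = 0}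

/-- A real quadric surface: a nonempty quadric surface. -/
def IsRealQuadricSurface {n : ℕ} (Q : Set (En n)) : Prop :=
  IsQuadricSurface Q ∧ Q.Nonempty

/-- The set of connected components of a subset `F` of a topological space. -/
def componentsIn {α : Type*} [TopologicalSpace α] (F : Set α) : Set (Set α) :=
  {C | ∃ x ∈ F, C = connectedComponentIn F x}

/-- A convex quadric: the frontier of a convex connected component of the complement
of a real quadric surface. -/
def IsConvexQuadric {n : ℕ} (S : Set (En n)) : Prop :=
  ∃ Q U : Set (En n), IsRealQuadricSurface Q ∧ U ∈ componentsIn Qᶜ ∧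
    Convex ℝ U ∧ S = frontier U

section Components

variable {X : Type*} [TopologicalSpace X]

lemma connectedComponentIn_union_left {U W : Set X} (hU : IsOpen U) (hW : IsOpen W)
    (hUW : Disjoint U W) {x : X} (hx : x ∈ U) :
    connectedComponentIn (U ∪ W) x = connectedComponentIn U x := by
  have hxU : x ∈ U ∪ W := Or.inl hx
  refine (connectedComponentIn_mono x subset_union_left).antisymm' ?_
  rcases isPreconnected_connectedComponentIn.subset_or_subset hU hW hUW
      (connectedComponentIn_subset _ x) with hsub | hsub
  · exact isPreconnected_connectedComponentIn.subset_connectedComponentIn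
      (mem_connectedComponentIn hxU) hsub
  · exact absurd (hsub (mem_connectedComponentIn hxU)) (hUW.notMem_of_mem_left hx)

lemma componentsIn_union_subset {U W : Set X} (hU : IsOpen U) (hW : IsOpen W)
    (hUW : Disjoint U W) : componentsIn (U ∪ W) ⊆ componentsIn U ∪ componentsIn W := by
  rintro C ⟨x, hx | hx, rfl⟩
  · exact Or.inl ⟨x, hx, connectedComponentIn_union_left hU hW hUW hx⟩
  · refine Or.inr ⟨x, hx, ?_⟩
    rw [union_comm]
    exact connectedComponentIn_union_left hW hU hUW.symm hx

lemma encard_componentsIn_le_two {S A B : Set X} (hS : S ⊆ A ∪ B)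
    (hA : ∀ x ∈ A, ∀ y ∈ A, connectedComponentIn S x = connectedComponentIn S y)
    (hB : ∀ x ∈ B, ∀ y ∈ B, connectedComponentIn S x = connectedComponentIn S y) :
    (componentsIn S).encard ≤ 2 := by
  have hsub : componentsIn S ⊆ connectedComponentIn S '' A ∪ connectedComponentIn S '' B := by
    rintro C ⟨x, hx, rfl⟩
    rcases hS hx with h | h
    exacts [Or.inl (mem_image_of_mem _ h), Or.inr (mem_image_of_mem _ h)]
  have hone : ∀ A : Set X, (∀ x ∈ A, ∀ y ∈ A,
      connectedComponentIn S x = connectedComponentIn S y) →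
      (connectedComponentIn S '' A).encard ≤ 1 := by
    intro A hA
    rw [encard_le_one_iff]
    rintro _ _ ⟨x, hx, rfl⟩ ⟨y, hy, rfl⟩
    exact hA x hx y hy
  calc (componentsIn S).encard
      ≤ (connectedComponentIn S '' A ∪ connectedComponentIn S '' B).encard :=
        encard_le_encard hsub
    _ ≤ (connectedComponentIn S '' A).encard + (connectedComponentIn S '' B).encard :=
      encard_union_le _ _
    _ ≤ 1 + 1 := add_le_add (hone A hA) (hone B hB)
    _ = 2 := by norm_num

lemma encard_componentsIn_ne_zero_le {f : X → ℝ} (hf : Continuous f) :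
    (componentsIn {x | f x ≠ 0}).encard ≤
      (componentsIn {x | 0 < f x}).encard + (componentsIn {x | f x < 0}).encard := by
  have hsplit : {x | f x ≠ 0} = {x | 0 < f x} ∪ {x | f x < 0} := by
    ext x
    simp only [mem_ofPred_eq, mem_union, ne_iff_lt_or_gt, or_comm]
  rw [hsplit]
  refine (encard_le_encard (componentsIn_union_subset (isOpen_lt continuous_const hf)
    (isOpen_lt hf continuous_const) ?_)).trans (encard_union_le _ _)
  exact disjoint_left.2 fun x (h₁ : 0 < f x) h₂ => lt_asymm h₁ h₂

end Components

section Rays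

variable {V : Type*} [AddCommGroup V] [Module ℝ V] [TopologicalSpace V] [ContinuousAdd V]
  [ContinuousSMul ℝ V]

lemma connectedComponentIn_eq_of_segment_subset {S : Set V} {x y : V}
    (h : segment ℝ x y ⊆ S) : connectedComponentIn S x = connectedComponentIn S y :=
  connectedComponentIn_eq <| (convex_segment x y).isPreconnected.subset_connectedComponentIn
    (left_mem_segment ℝ x y) h (right_mem_segment ℝ x y)

def rayCore (S : Set V) (v : V) : Set V := {x | ∀ t : ℝ, 0 ≤ t → x + t • v ∈ S}

lemma connectedComponentIn_add_smul_eq {S : Set V} {x v : V} (hx : x ∈ rayCore S v) {T : ℝ}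
    (hT : 0 ≤ T) : connectedComponentIn S (x + T • v) = connectedComponentIn S x := by
  refine (connectedComponentIn_eq_of_segment_subset ?_).symm
  rw [segment_eq_image']
  rintro - ⟨θ, hθ, rfl⟩
  simpa only [add_sub_cancel_left, smul_smul] using hx _ (mul_nonneg hθ.1 hT)

end Rays

lemma pos_of_concave_of_mem_Icc {a b c t : ℝ} (hc : c ≤ 0) (h0 : 0 < a) (h1 : 0 < a + b + c)
    (ht : t ∈ Icc (0 : ℝ) 1) : 0 < a + t * b + t ^ 2 * c := by
  obtain ⟨ht0, ht1⟩ := ht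
  rcases le_total a (a + b + c) with h | h
  · nlinarith [mul_nonneg (mul_nonneg ht0 (sub_nonneg.2 ht1)) (neg_nonneg.2 hc),
      mul_nonneg ht0 (sub_nonneg.2 h)]
  · nlinarith [mul_nonneg (mul_nonneg ht0 (sub_nonneg.2 ht1)) (neg_nonneg.2 hc),
      mul_nonneg (sub_nonneg.2 ht1) (sub_nonneg.2 h)]

lemma neg_abs_le_mul_of_mem_Icc {s : ℝ} (hs : s ∈ Icc (0 : ℝ) 1) (a : ℝ) : -|a| ≤ s * a := by
  nlinarith [mul_nonneg hs.1 (neg_le_iff_add_nonneg.1 (neg_abs_le a)),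
    mul_nonneg (sub_nonneg.2 hs.2) (abs_nonneg a)]

lemma exists_forall_mem_Icc_pos {q : ℝ} (hq : 0 < q) (a₀ a₁ a₂ b₀ b₁ : ℝ) :
    ∃ T ≥ 0, ∀ s ∈ Icc (0 : ℝ) 1,
      0 < a₀ + s * a₁ + s ^ 2 * a₂ + T * (b₀ + s * b₁) + T ^ 2 * q := by
  obtain ⟨M, hM, hMdef⟩ : ∃ M, 0 ≤ M ∧ M = |a₀| + |a₁| + |a₂| + |b₀| + |b₁| :=
    ⟨_, by positivity, rfl⟩
  obtain ⟨T, hqT, hT⟩ : ∃ T, M + 1 ≤ q * T ∧ M < T := by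
    refine ⟨M + (M + 1) / q, ?_, lt_add_of_pos_right M (by positivity)⟩
    rw [mul_add, mul_div_cancel₀ _ hq.ne']
    nlinarith
  refine ⟨T, by linarith, fun s hs => ?_⟩
  have hs2 : s ^ 2 ∈ Icc (0 : ℝ) 1 := ⟨by positivity, by nlinarith [hs.1, hs.2]⟩
  have hA : -M ≤ a₀ + s * a₁ + s ^ 2 * a₂ := by
    linarith [neg_abs_le a₀, neg_abs_le_mul_of_mem_Icc hs a₁, neg_abs_le_mul_of_mem_Icc hs2 a₂,
      abs_nonneg b₀, abs_nonneg b₁]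
  have hB : -M ≤ b₀ + s * b₁ := by
    linarith [neg_abs_le b₀, neg_abs_le_mul_of_mem_Icc hs b₁, abs_nonneg a₀, abs_nonneg a₁,
      abs_nonneg a₂]
  nlinarith

section QuadraticFunction

open QuadraticMap

variable {V : Type*} [AddCommGroup V] [Module ℝ V]
  (Q : QuadraticForm ℝ V) (ℓ : V →ₗ[ℝ] ℝ) (c : ℝ)

def posSet : Set V := {x | 0 < Q x + ℓ x + c}

lemma mem_posSet {x : V} : x ∈ posSet Q ℓ c ↔ 0 < Q x + ℓ x + c := Iff.rfl

lemma quadratic_add_linear_apply_add_smul (x v : V) (t : ℝ) :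
    Q (x + t • v) + ℓ (x + t • v) + c =
      Q x + ℓ x + c + t * (polar Q x v + ℓ v) + t ^ 2 * Q v := by
  rw [QuadraticMap.map_add (⇑Q), QuadraticMap.map_smul, polar_smul_right, map_add, map_smul]
  simp only [smul_eq_mul]
  ring

variable {Q ℓ c}

lemma segment_subset_posSet {x y : V} (hx : x ∈ posSet Q ℓ c) (hy : y ∈ posSet Q ℓ c)
    (hxy : Q (y - x) ≤ 0) : segment ℝ x y ⊆ posSet Q ℓ c := by
  have hy' := quadratic_add_linear_apply_add_smul Q ℓ c x (y - x) 1
  rw [one_smul, add_sub_cancel, one_mul, one_pow, one_mul] at hy'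
  rw [segment_eq_image']
  rintro - ⟨t, ht, rfl⟩
  rw [mem_posSet, quadratic_add_linear_apply_add_smul]
  exact pos_of_concave_of_mem_Icc hxy hx (hy' ▸ hy) ht

lemma mem_rayCore_or_mem_rayCore_neg {v x : V} (hv : 0 ≤ Q v) (hx : x ∈ posSet Q ℓ c) :
    x ∈ rayCore (posSet Q ℓ c) v ∨ x ∈ rayCore (posSet Q ℓ c) (-v) := by
  have hx' : 0 < Q x + ℓ x + c := hx
  rcases le_total 0 (polar Q x v + ℓ v) with hd | hd
  · refine Or.inl fun t ht => ?_
    rw [mem_posSet, quadratic_add_linear_apply_add_smul]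
    nlinarith [mul_nonneg ht hd, mul_nonneg (sq_nonneg t) hv]
  · refine Or.inr fun t ht => ?_
    rw [mem_posSet, quadratic_add_linear_apply_add_smul, polar_neg_right, map_neg,
      QuadraticMap.map_neg]
    nlinarith [mul_nonneg ht (neg_nonneg.2 hd), mul_nonneg (sq_nonneg t) hv]

lemma exists_segment_add_smul_subset_posSet {v : V} (hv : 0 < Q v) (x y : V) :
    ∃ T : ℝ, 0 ≤ T ∧ segment ℝ (x + T • v) (y + T • v) ⊆ posSet Q ℓ c := by
  obtain ⟨T, hT, hpos⟩ := exists_forall_mem_Icc_pos hv (Q x + ℓ x + c)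
    (polar Q x (y - x) + ℓ (y - x)) (Q (y - x)) (polar Q x v + ℓ v) (polar Q (y - x) v)
  refine ⟨T, hT, ?_⟩
  rw [segment_eq_image']
  rintro - ⟨s, hs, rfl⟩
  dsimp only
  have hpt : x + T • v + s • (y + T • v - (x + T • v)) = x + s • (y - x) + T • v := by module
  rw [hpt, mem_posSet, quadratic_add_linear_apply_add_smul,
    quadratic_add_linear_apply_add_smul, polar_add_left, polar_smul_left, smul_eq_mul]
  convert hpos s hs using 1
  ring

variable [TopologicalSpace V] [ContinuousAdd V] [ContinuousSMul ℝ V]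

lemma connectedComponentIn_posSet_eq_of_mem_rayCore {v x y : V} (hv : 0 < Q v)
    (hx : x ∈ rayCore (posSet Q ℓ c) v) (hy : y ∈ rayCore (posSet Q ℓ c) v) :
    connectedComponentIn (posSet Q ℓ c) x = connectedComponentIn (posSet Q ℓ c) y := by
  obtain ⟨T, hT, hseg⟩ := exists_segment_add_smul_subset_posSet (ℓ := ℓ) (c := c) hv x y
  rw [← connectedComponentIn_add_smul_eq hx hT, ← connectedComponentIn_add_smul_eq hy hT]
  exact connectedComponentIn_eq_of_segment_subset hseg

variable (Q ℓ c)

theorem encard_componentsIn_posSet_le_two : (componentsIn (posSet Q ℓ c)).encard ≤ 2 := by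
  by_cases h : ∃ v, 0 < Q v
  · obtain ⟨v, hv⟩ := h
    have hv' : 0 < Q (-v) := by rwa [QuadraticMap.map_neg]
    exact encard_componentsIn_le_two (fun x hx => mem_rayCore_or_mem_rayCore_neg hv.le hx)
      (fun x hx y hy => connectedComponentIn_posSet_eq_of_mem_rayCore hv hx hy)
      (fun x hx y hy => connectedComponentIn_posSet_eq_of_mem_rayCore hv' hx hy)
  · push Not at h
    have hP : ∀ x ∈ posSet Q ℓ c, ∀ y ∈ posSet Q ℓ c,
        connectedComponentIn (posSet Q ℓ c) x = connectedComponentIn (posSet Q ℓ c) y :=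
      fun x hx y hy => connectedComponentIn_eq_of_segment_subset
        (segment_subset_posSet hx hy (h _))
    exact encard_componentsIn_le_two (B := posSet Q ℓ c) subset_union_left hP hP

theorem encard_componentsIn_ne_zero_le_four (hf : Continuous fun x => Q x + ℓ x + c) :
    (componentsIn {x | Q x + ℓ x + c ≠ 0}).encard ≤ 4 := by
  have hneg : {x | Q x + ℓ x + c < 0} = posSet (-Q) (-ℓ) (-c) := by
    ext x
    simp only [mem_ofPred_eq, mem_posSet, neg_apply, LinearMap.neg_apply, ← neg_add, neg_pos]
  calc (componentsIn {x | Q x + ℓ x + c ≠ 0}).encard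
      ≤ (componentsIn (posSet Q ℓ c)).encard + (componentsIn {x | Q x + ℓ x + c < 0}).encard :=
        encard_componentsIn_ne_zero_le hf
    _ ≤ 2 + 2 := by
      rw [hneg]
      exact add_le_add (encard_componentsIn_posSet_le_two Q ℓ c)
        (encard_componentsIn_posSet_le_two (-Q) (-ℓ) (-c))
    _ = 4 := by norm_num

end QuadraticFunction

lemma exists_quadraticForm_add_linearMap_eq {ι : Type*} [Fintype ι] (a : Matrix ι ι ℝ)
    (b : ι → ℝ) :
    ∃ (Q : QuadraticForm ℝ (EuclideanSpace ℝ ι)) (ℓ : EuclideanSpace ℝ ι →ₗ[ℝ] ℝ),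
      ∀ x, Q x + ℓ x = (∑ i, ∑ k, a i k * x i * x k) + 2 * ∑ i, b i * x i := by
  let p (i : ι) : EuclideanSpace ℝ ι →ₗ[ℝ] ℝ :=
    (EuclideanSpace.proj i : StrongDual ℝ (EuclideanSpace ℝ ι)).toLinearMap
  refine ⟨∑ i, ∑ k, a i k • QuadraticMap.linMulLin (p i) (p k), ∑ i, (2 * b i) • p i,
    fun x => ?_⟩
  simp [p, QuadraticMap.linMulLin_apply, Finset.mul_sum, mul_assoc, mul_left_comm]

theorem quadric_complement_at_most_four_components_general
    {n : ℕ} (Q : Set (En n)) (hQ : IsRealQuadricSurface Q) :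
    (componentsIn Qᶜ).Finite ∧ (componentsIn Qᶜ).ncard ≤ 4 := by
  obtain ⟨⟨a, b, c, -, -, rfl⟩, -⟩ := hQ
  obtain ⟨q, ℓ, hqℓ⟩ := exists_quadraticForm_add_linearMap_eq a b
  have hf : Continuous fun x => q x + ℓ x + c := by
    simp_rw [hqℓ]
    fun_prop
  rw [← encard_le_coe_iff_finite_ncard_le, compl_ofPred]
  simp only [← hqℓ, ← ne_eq]
  exact encard_componentsIn_ne_zero_le_four q ℓ c hf

/-- the complement of a real quadric surface in ℝⁿ (n ≥ 2) has at most
four connected components. -/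
theorem quadric_complement_at_most_four_components
    {n : ℕ} (hn : 2 ≤ n) (Q : Set (En n)) (hQ : IsRealQuadricSurface Q) :
    (componentsIn Qᶜ).Finite ∧ (componentsIn Qᶜ).ncard ≤ 4 :=
  quadric_complement_at_most_four_components_general Q hQ
end
end

section
/- Let n ≥ 2 and 2 ≤ k ≤ n, and let Q = {x ∈ ℝⁿ : x₁² − x₂² − ⋯ − x_k² = 1}. Then ℝⁿ \ Q has exactly three connected components, namely U₊ = {x : x₁ > √(x₂² + ⋯ + x_k² + 1)}, U₋ = {x : x₁ < −√(x₂² + ⋯ + x_k² + 1)}, and W = {x : x₁² − x₂² − ⋯ − x_k² < 1}, and the components U₊ and U₋ are convex. -/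
open Set Metric

noncomputable section

/-!
Put `ρ(x) = √(x₂² + ⋯ + x_k² + 1)`. Then `Q = {|x₁| = ρ}`, and its complement is the disjoint
union of the open sets `U₊ = {x₁ > ρ}`, `U₋ = {x₁ < -ρ}` and `W = {|x₁| < ρ}`. Since `ρ(x)` is the
Euclidean norm of the affine image `(x₂, …, x_k, 1)` of `x`, it is convex, so `U₊` and `U₋` are
strict sublevel sets of the convex functions `ρ ∓ x₁`. The form `x₁² - x₂² - ⋯ - x_k²` is
homogeneous of degree 2, so `W` is star-shaped about `0`. Three disjoint open preconnected
nonempty sets are exactly the connected components of their union.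
-/

section Components

variable {α : Type*} [TopologicalSpace α] {𝒰 : Set (Set α)}

theorem connectedComponentIn_sUnion_of_pairwiseDisjoint (hopen : ∀ U ∈ 𝒰, IsOpen U)
    (hdisj : 𝒰.PairwiseDisjoint id) {U : Set α} (hU : U ∈ 𝒰) (hpre : IsPreconnected U)
    {x : α} (hx : x ∈ U) : connectedComponentIn (⋃₀ 𝒰) x = U := by
  refine subset_antisymm ?_ (hpre.subset_connectedComponentIn hx (subset_sUnion_of_mem hU))
  have hsplit : ⋃₀ 𝒰 = U ∪ ⋃₀ (𝒰 \ {U}) := by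
    rw [← sUnion_insert, insert_sdiff_singleton, insert_eq_of_mem hU]
  refine isPreconnected_connectedComponentIn.subset_left_of_subset_union (hopen U hU)
    (isOpen_sUnion fun V (hV : V ∈ 𝒰 \ {U}) => hopen V hV.1)
    (disjoint_sUnion_right.2 fun V (hV : V ∈ 𝒰 \ {U}) => hdisj hU hV.1 (Ne.symm hV.2))
    (hsplit ▸ connectedComponentIn_subset (⋃₀ 𝒰) x)
    ⟨x, mem_connectedComponentIn (subset_sUnion_of_mem hU hx), hx⟩

theorem componentsIn_sUnion_of_pairwiseDisjoint (hopen : ∀ U ∈ 𝒰, IsOpen U)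
    (hpre : ∀ U ∈ 𝒰, IsPreconnected U) (hne : ∀ U ∈ 𝒰, U.Nonempty)
    (hdisj : 𝒰.PairwiseDisjoint id) : componentsIn (⋃₀ 𝒰) = 𝒰 := by
  ext C
  constructor
  · rintro ⟨x, ⟨U, hU, hx⟩, rfl⟩
    rwa [connectedComponentIn_sUnion_of_pairwiseDisjoint hopen hdisj hU (hpre U hU) hx]
  · intro hC
    obtain ⟨x, hx⟩ := hne C hC
    exact ⟨x, ⟨C, hC, hx⟩,
      (connectedComponentIn_sUnion_of_pairwiseDisjoint hopen hdisj hC (hpre C hC) hx).symm⟩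

end Components

theorem StarConvex.setOf_lt_of_homogeneous {E : Type*} [AddCommGroup E] [Module ℝ E]
    {φ : E → ℝ} (hφ : ∀ (c : ℝ) x, φ (c • x) = c ^ 2 * φ x) {r : ℝ} (hr : 0 < r) :
    StarConvex ℝ 0 {x | φ x < r} := by
  intro y hy a b _ hb hab
  have hb2 : b ^ 2 ≤ 1 := pow_le_one₀ hb (by linarith)
  simp only [smul_zero, zero_add, mem_ofPred_eq, hφ] at hy ⊢
  rcases le_or_gt (φ y) 0 with hneg | hpos
  · nlinarith
  · exact (mul_le_of_le_one_left hpos.le hb2).trans_lt hy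

theorem sq_ne_sq_iff_of_nonneg {a ρ : ℝ} (hρ : 0 ≤ ρ) :
    a ^ 2 ≠ ρ ^ 2 ↔ ρ < a ∨ a < -ρ ∨ a ^ 2 < ρ ^ 2 := by
  rw [ne_iff_lt_or_gt, or_comm, sq_lt_sq, abs_of_nonneg hρ, lt_abs, lt_neg, or_assoc]

section Hyperboloid

variable {ι : Type*} (t : ι) (s : Finset ι)

/-- The upper sheet of the hyperboloid is the graph `x t = sheetHeight s x`. -/
def sheetHeight (x : EuclideanSpace ℝ ι) : ℝ := √((∑ i ∈ s, x i ^ 2) + 1)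

def hyperboloid : Set (EuclideanSpace ℝ ι) := {x | x t ^ 2 - ∑ i ∈ s, x i ^ 2 = 1}

def upperRegion : Set (EuclideanSpace ℝ ι) := {x | sheetHeight s x < x t}

def lowerRegion : Set (EuclideanSpace ℝ ι) := {x | x t < -sheetHeight s x}

def innerRegion : Set (EuclideanSpace ℝ ι) := {x | x t ^ 2 - ∑ i ∈ s, x i ^ 2 < 1}

variable {s}

theorem sheetHeight_nonneg (x : EuclideanSpace ℝ ι) : 0 ≤ sheetHeight s x :=
  Real.sqrt_nonneg _

theorem sheetHeight_sq (x : EuclideanSpace ℝ ι) :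
    sheetHeight s x ^ 2 = (∑ i ∈ s, x i ^ 2) + 1 :=
  Real.sq_sqrt (by positivity)

variable (s)

theorem continuous_sheetHeight : Continuous (sheetHeight s : EuclideanSpace ℝ ι → ℝ) := by
  unfold sheetHeight
  fun_prop

theorem convexOn_sheetHeight [Fintype ι] :
    ConvexOn ℝ univ (sheetHeight s : EuclideanSpace ℝ ι → ℝ) := by
  classical
  let lift (x : EuclideanSpace ℝ ι) : EuclideanSpace ℝ (Option ι) :=
    WithLp.toLp 2 fun o => o.elim 1 fun i => if i ∈ s then x i else 0
  have norm_lift (x) : ‖lift x‖ = sheetHeight s x := by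
    simp [lift, sheetHeight, EuclideanSpace.norm_eq, Fintype.sum_option, add_comm,
      apply_ite (· ^ 2), Finset.sum_ite_mem]
  have lift_combo (x y) {a b : ℝ} (hab : a + b = 1) :
      lift (a • x + b • y) = a • lift x + b • lift y := by
    ext (_ | i)
    · simp [lift, hab]
    · by_cases hi : i ∈ s <;> simp [lift, hi]
  refine ⟨convex_univ, fun x _ y _ a b ha hb hab => ?_⟩
  simp only [← norm_lift, lift_combo x y hab, smul_eq_mul]
  calc ‖a • lift x + b • lift y‖ ≤ ‖a • lift x‖ + ‖b • lift y‖ := norm_add_le _ _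
    _ = a * ‖lift x‖ + b * ‖lift y‖ := by
      rw [norm_smul, norm_smul, Real.norm_of_nonneg ha, Real.norm_of_nonneg hb]

theorem convex_upperRegion [Fintype ι] : Convex ℝ (upperRegion t s) := by
  have h := ((convexOn_sheetHeight s).sub
    ((EuclideanSpace.proj t : EuclideanSpace ℝ ι →L[ℝ] ℝ).toLinearMap.concaveOn
      convex_univ)).convex_lt 0
  simpa [upperRegion, sub_neg] using h

theorem convex_lowerRegion [Fintype ι] : Convex ℝ (lowerRegion t s) := by
  have h := ((convexOn_sheetHeight s).add
    ((EuclideanSpace.proj t : EuclideanSpace ℝ ι →L[ℝ] ℝ).toLinearMap.convexOn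
      convex_univ)).convex_lt 0
  simpa [lowerRegion, lt_neg_iff_add_neg'] using h

theorem starConvex_innerRegion : StarConvex ℝ 0 (innerRegion t s) :=
  StarConvex.setOf_lt_of_homogeneous (fun c x => by simp [mul_pow, mul_sub, Finset.mul_sum])
    one_pos

theorem compl_hyperboloid :
    (hyperboloid t s)ᶜ = upperRegion t s ∪ (lowerRegion t s ∪ innerRegion t s) := by
  ext x
  simp only [hyperboloid, upperRegion, lowerRegion, innerRegion, mem_compl_iff, mem_union,
    mem_ofPred_eq, sub_eq_iff_eq_add', sub_lt_iff_lt_add', ← sheetHeight_sq]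
  exact sq_ne_sq_iff_of_nonneg (sheetHeight_nonneg x)

theorem disjoint_upperRegion_lowerRegion : Disjoint (upperRegion t s) (lowerRegion t s) :=
  disjoint_left.2 fun x (hup : sheetHeight s x < x t) (hlow : x t < -sheetHeight s x) => by
    linarith [sheetHeight_nonneg (s := s) x]

theorem disjoint_upperRegion_innerRegion : Disjoint (upperRegion t s) (innerRegion t s) :=
  disjoint_left.2 fun x (hup : sheetHeight s x < x t)
      (hin : x t ^ 2 - ∑ i ∈ s, x i ^ 2 < 1) => by
    nlinarith [sheetHeight_nonneg (s := s) x, sheetHeight_sq (s := s) x]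

theorem disjoint_lowerRegion_innerRegion : Disjoint (lowerRegion t s) (innerRegion t s) :=
  disjoint_left.2 fun x (hlow : x t < -sheetHeight s x)
      (hin : x t ^ 2 - ∑ i ∈ s, x i ^ 2 < 1) => by
    nlinarith [sheetHeight_nonneg (s := s) x, sheetHeight_sq (s := s) x]

theorem isOpen_upperRegion : IsOpen (upperRegion t s) :=
  isOpen_lt (continuous_sheetHeight s) (by fun_prop)

theorem isOpen_lowerRegion : IsOpen (lowerRegion t s) :=
  isOpen_lt (by fun_prop) (continuous_sheetHeight s).neg

theorem isOpen_innerRegion : IsOpen (innerRegion t s) :=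
  isOpen_lt (by fun_prop) continuous_const

variable {t s}

theorem sheetHeight_single [DecidableEq ι] (ht : t ∉ s) (c : ℝ) :
    sheetHeight s (EuclideanSpace.single t c) = 1 := by
  simp [sheetHeight, ht]

theorem upperRegion_nonempty (ht : t ∉ s) : (upperRegion t s).Nonempty := by
  classical
  exact ⟨EuclideanSpace.single t 2, by simp [upperRegion, sheetHeight_single ht]⟩

theorem lowerRegion_nonempty (ht : t ∉ s) : (lowerRegion t s).Nonempty := by
  classical
  exact ⟨EuclideanSpace.single t (-2), by simp [lowerRegion, sheetHeight_single ht]⟩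

theorem zero_mem_innerRegion : (0 : EuclideanSpace ℝ ι) ∈ innerRegion t s := by
  simp [innerRegion]

theorem componentsIn_compl_hyperboloid [Fintype ι] (ht : t ∉ s) :
    componentsIn (hyperboloid t s)ᶜ = {upperRegion t s, lowerRegion t s, innerRegion t s} := by
  rw [compl_hyperboloid, ← sUnion_pair (lowerRegion t s), ← sUnion_insert]
  refine componentsIn_sUnion_of_pairwiseDisjoint ?_ ?_ ?_ ?_
  · simp only [mem_insert_iff, mem_singleton_iff, forall_eq_or_imp, forall_eq]
    exact ⟨isOpen_upperRegion t s, isOpen_lowerRegion t s, isOpen_innerRegion t s⟩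
  · simp only [mem_insert_iff, mem_singleton_iff, forall_eq_or_imp, forall_eq]
    exact ⟨(convex_upperRegion t s).isPreconnected, (convex_lowerRegion t s).isPreconnected,
      ((starConvex_innerRegion t s).isPathConnected
        zero_mem_innerRegion).isConnected.isPreconnected⟩
  · simp only [mem_insert_iff, mem_singleton_iff, forall_eq_or_imp, forall_eq]
    exact ⟨upperRegion_nonempty ht, lowerRegion_nonempty ht, ⟨0, zero_mem_innerRegion⟩⟩
  · simp [pairwiseDisjoint_insert, disjoint_upperRegion_lowerRegion,
      disjoint_upperRegion_innerRegion, disjoint_lowerRegion_innerRegion]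

end Hyperboloid

/-- for 2 ≤ k ≤ n, the complement of Q = {x : x₁² − x₂² − ⋯ − x_k² = 1}
in ℝⁿ has exactly three connected components U₊, U₋, W, and U₊, U₋ are convex. -/
theorem components_of_two_sheeted_hyperboloid
    {n k : ℕ} (hn : 2 ≤ n)
    (Q Up Um W : Set (En n))
    (hQ : Q = {x : En n | x ⟨0, by omega⟩ ^ 2 -
      ∑ i ∈ Finset.univ.filter (fun i : Fin n => 1 ≤ (i : ℕ) ∧ (i : ℕ) < k), x i ^ 2 = 1})
    (hUp : Up = {x : En n | Real.sqrt
      ((∑ i ∈ Finset.univ.filter (fun i : Fin n => 1 ≤ (i : ℕ) ∧ (i : ℕ) < k), x i ^ 2) + 1)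
        < x ⟨0, by omega⟩})
    (hUm : Um = {x : En n | x ⟨0, by omega⟩ < -Real.sqrt
      ((∑ i ∈ Finset.univ.filter (fun i : Fin n => 1 ≤ (i : ℕ) ∧ (i : ℕ) < k), x i ^ 2) + 1)})
    (hW : W = {x : En n | x ⟨0, by omega⟩ ^ 2 -
      ∑ i ∈ Finset.univ.filter (fun i : Fin n => 1 ≤ (i : ℕ) ∧ (i : ℕ) < k), x i ^ 2 < 1}) :
    componentsIn Qᶜ = {Up, Um, W} ∧ Up ≠ Um ∧ Up ≠ W ∧ Um ≠ W ∧
      Convex ℝ Up ∧ Convex ℝ Um := by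
  subst hQ hUp hUm hW
  have ht : (⟨0, by omega⟩ : Fin n) ∉
      Finset.univ.filter (fun i : Fin n => 1 ≤ (i : ℕ) ∧ (i : ℕ) < k) := by
    simp
  exact ⟨componentsIn_compl_hyperboloid ht,
    (disjoint_upperRegion_lowerRegion _ _).ne (upperRegion_nonempty ht).ne_empty,
    (disjoint_upperRegion_innerRegion _ _).ne (upperRegion_nonempty ht).ne_empty,
    (disjoint_lowerRegion_innerRegion _ _).ne (lowerRegion_nonempty ht).ne_empty,
    convex_upperRegion _ _, convex_lowerRegion _ _⟩
end
end

section
/- Let n ≥ 3 and 2 ≤ k ≤ n − 1, and let Q = {x ∈ ℝⁿ : x₁² + ⋯ + x_k² − x_{k+1}² − ⋯ − xₙ² = 1}. Then ℝⁿ \ Q has exactly two connected components, namely {x : x₁² + ⋯ + x_k² − x_{k+1}² − ⋯ − xₙ² < 1} and {x : x₁² + ⋯ + x_k² − x_{k+1}² − ⋯ − xₙ² > 1}, and neither of these two components is convex. -/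
open Set Metric

noncomputable section

/-!
Write the form as `q x = ‖P x‖² - ‖x - P x‖²`, where `P` is the idempotent keeping the first `k`
coordinates. Since `q (t • x) = t² q x`, the set `{q < 1}` is star-shaped about `0`. Sliding `x`
along the segment to `P x` does not decrease `q`, and `q = ‖·‖²` on the range of `P`, so every point
of `{q > 1}` is joined inside it to `{w ∈ range P | 1 < ‖w‖}`, which is connected because the range
has dimension `k ≥ 2`. The two open sets are disjoint, hence they are the components. For
`w ∈ range P` and `v ∈ ker P` of norm `1`, the chord from `w + v` to `w - v` leaves `{q < 1}` at its
midpoint `w`, and the chord from `w` to `-w` (now of norm `2`) leaves `{q > 1}` at `0`.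
-/

section Topology

variable {X : Type*} [TopologicalSpace X] {s t A B : Set X}

theorem IsPreconnected.of_forall_exists_meeting (ht : IsPreconnected t) (hts : t ⊆ s)
    (h : ∀ x ∈ s, ∃ u ⊆ s, x ∈ u ∧ (u ∩ t).Nonempty ∧ IsPreconnected u) :
    IsPreconnected s := by
  refine isPreconnected_of_forall_pair fun x hx y hy => ?_
  obtain ⟨u, hus, hxu, ⟨a, hau, hat⟩, hu⟩ := h x hx
  obtain ⟨v, hvs, hyv, ⟨b, hbv, hbt⟩, hv⟩ := h y hy
  refine ⟨u ∪ t ∪ v, union_subset (union_subset hus hts) hvs, Or.inl (Or.inl hxu), Or.inr hyv, ?_⟩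
  exact (hu.union a hau hat ht).union b (Or.inr hbt) hbv hv

theorem connectedComponentIn_union_eq_left (hA : IsOpen A) (hB : IsOpen B) (hAB : Disjoint A B)
    (hA' : IsPreconnected A) {x : X} (hx : x ∈ A) : connectedComponentIn (A ∪ B) x = A :=
  subset_antisymm
    (isPreconnected_connectedComponentIn.subset_left_of_subset_union hA hB hAB
      (connectedComponentIn_subset _ _) ⟨x, mem_connectedComponentIn (Or.inl hx), hx⟩)
    (hA'.subset_connectedComponentIn hx subset_union_left)

theorem componentsIn_union_eq_pair_of_isOpen (hA : IsOpen A) (hB : IsOpen B) (hAB : Disjoint A B)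
    (hA' : IsConnected A) (hB' : IsConnected B) : componentsIn (A ∪ B) = {A, B} := by
  have hcompA {x} : x ∈ A → connectedComponentIn (A ∪ B) x = A :=
    connectedComponentIn_union_eq_left hA hB hAB hA'.2
  have hcompB {x} (hx : x ∈ B) : connectedComponentIn (A ∪ B) x = B := by
    rw [union_comm]
    exact connectedComponentIn_union_eq_left hB hA hAB.symm hB'.2 hx
  ext C
  constructor
  · rintro ⟨x, hx | hx, rfl⟩
    exacts [Or.inl (hcompA hx), Or.inr (hcompB hx)]
  · rintro (rfl | rfl)
    · obtain ⟨a, ha⟩ := hA'.1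
      exact ⟨a, Or.inl ha, (hcompA ha).symm⟩
    · obtain ⟨b, hb⟩ := hB'.1
      exact ⟨b, Or.inr hb, (hcompB hb).symm⟩

end Topology

theorem Submodule.ne_bot_of_one_lt_rank {R M : Type*} [Semiring R] [Nontrivial R]
    [AddCommMonoid M] [Module R M] {p : Submodule R M} (h : 1 < Module.rank R p) : p ≠ ⊥ := by
  rintro rfl
  simp at h

section NormedSpace

variable {F : Type*} [NormedAddCommGroup F] [NormedSpace ℝ F]

theorem isPreconnected_setOf_lt_norm (h : 1 < Module.rank ℝ F) {r : ℝ} (hr : 0 ≤ r) :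
    IsPreconnected {x : F | r < ‖x‖} := by
  have hpolar : (fun p : F × ℝ => p.2 • p.1) '' (sphere 0 1 ×ˢ Ioi r) = {x : F | r < ‖x‖} := by
    ext x
    constructor
    · rintro ⟨⟨θ, t⟩, ⟨hθ, ht⟩, rfl⟩
      simp_all [norm_smul, abs_of_pos (hr.trans_lt ht)]
    · intro hx
      have hx0 : ‖x‖ ≠ 0 := (hr.trans_lt hx).ne'
      exact ⟨(‖x‖⁻¹ • x, ‖x‖), ⟨by simp [norm_smul, hx0], hx⟩, by simp [smul_smul, hx0]⟩
  rw [← hpolar]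
  exact ((isPreconnected_sphere h 0 1).prod isPreconnected_Ioi).image _
    (continuous_snd.smul continuous_fst).continuousOn

theorem Submodule.exists_mem_norm_eq {p : Submodule ℝ F} (hp : p ≠ ⊥) {c : ℝ} (hc : 0 ≤ c) :
    ∃ x ∈ p, ‖x‖ = c := by
  have : Nontrivial p := Submodule.nontrivial_iff_ne_bot.mpr hp
  obtain ⟨x, hx⟩ := exists_norm_eq p hc
  exact ⟨x, x.2, hx⟩

end NormedSpace

section SplitForm

variable {E : Type*} [NormedAddCommGroup E] [NormedSpace ℝ E] (P : E →L[ℝ] E)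

def splitForm (x : E) : ℝ := ‖P x‖ ^ 2 - ‖x - P x‖ ^ 2

variable {P}

theorem continuous_splitForm : Continuous (splitForm P) := by
  unfold splitForm; fun_prop

theorem splitForm_smul (t : ℝ) (x : E) : splitForm P (t • x) = t ^ 2 * splitForm P x := by
  simp only [splitForm, map_smul, ← smul_sub, norm_smul, mul_pow, Real.norm_eq_abs, sq_abs]
  ring

theorem splitForm_add {w v : E} (hw : P w = w) (hv : P v = 0) :
    splitForm P (w + v) = ‖w‖ ^ 2 - ‖v‖ ^ 2 := by
  simp [splitForm, hw, hv]

theorem splitForm_of_apply_eq_self {w : E} (hw : P w = w) : splitForm P w = ‖w‖ ^ 2 := by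
  simpa using splitForm_add hw (map_zero P)

theorem IsIdempotentElem.apply_apply (hP : IsIdempotentElem P) (x : E) : P (P x) = P x :=
  DFunLike.congr_fun hP.eq x

theorem IsIdempotentElem.apply_of_mem_range (hP : IsIdempotentElem P) {w : E} (hw : w ∈ P.range) :
    P w = w := by
  obtain ⟨y, rfl⟩ := hw
  exact hP.apply_apply y

theorem splitForm_le_of_mem_segment (hP : IsIdempotentElem P) {x y : E}
    (hy : y ∈ segment ℝ x (P x)) : splitForm P x ≤ splitForm P y := by
  obtain ⟨a, b, ha, hb, hab, rfl⟩ := hy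
  have hPy : P (a • x + b • P x) = P x := by
    rw [map_add, map_smul, map_smul, hP.apply_apply, ← add_smul, hab, one_smul]
  have hres : a • x + b • P x - P x = a • (x - P x) := by
    obtain rfl : b = 1 - a := by linarith
    module
  have ha2 : a ^ 2 ≤ 1 := by nlinarith
  simp only [splitForm, hPy, hres, norm_smul, mul_pow, Real.norm_eq_abs, sq_abs]
  nlinarith [sq_nonneg ‖x - P x‖]

theorem starConvex_setOf_splitForm_lt {c : ℝ} (hc : 0 < c) :
    StarConvex ℝ 0 {x | splitForm P x < c} := by
  intro x hx a b ha hb hab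
  have hb2 : b ^ 2 ≤ 1 := by nlinarith
  change splitForm P x < c at hx
  change splitForm P (a • 0 + b • x) < c
  rw [smul_zero, zero_add, splitForm_smul]
  rcases le_total (splitForm P x) 0 with h | h <;> nlinarith

theorem isPreconnected_setOf_one_lt_splitForm (hP : IsIdempotentElem P)
    (hrank : 1 < Module.rank ℝ P.range) : IsPreconnected {x | 1 < splitForm P x} := by
  let T : Set E := (↑) '' {w : P.range | 1 < ‖w‖}
  have hT : IsPreconnected T := (isPreconnected_setOf_lt_norm hrank zero_le_one).image _
    continuous_subtype_val.continuousOn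
  refine hT.of_forall_exists_meeting ?_ fun x hx => ⟨segment ℝ x (P x),
    fun y hy => hx.trans_le (splitForm_le_of_mem_segment hP hy), left_mem_segment ℝ _ _,
    ⟨P x, right_mem_segment ℝ _ _, ⟨⟨P x, LinearMap.mem_range_self _ x⟩, ?_, rfl⟩⟩,
    (convex_segment _ _).isPreconnected⟩
  · rintro _ ⟨⟨_, y, rfl⟩, hy, rfl⟩
    change 1 < splitForm P (P y)
    rw [splitForm_of_apply_eq_self (hP.apply_apply y)]
    have : 1 < ‖P y‖ := hy
    nlinarith
  · have hle : splitForm P x ≤ ‖P x‖ ^ 2 := by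
      simp [splitForm]
    have : 1 < ‖P x‖ ^ 2 := lt_of_lt_of_le hx hle
    show 1 < ‖P x‖
    nlinarith [norm_nonneg (P x)]

theorem not_convex_setOf_one_lt_splitForm (hP : IsIdempotentElem P) (hrange : P.range ≠ ⊥) :
    ¬Convex ℝ {x | 1 < splitForm P x} := by
  obtain ⟨w, hwP, hw⟩ := Submodule.exists_mem_norm_eq hrange zero_le_two
  have hPw : P w = w := hP.apply_of_mem_range hwP
  have hq : splitForm P w = 4 := by rw [splitForm_of_apply_eq_self hPw, hw]; norm_num
  have hq' : splitForm P (-w) = 4 := by rw [← neg_one_smul ℝ w, splitForm_smul, hq]; norm_num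
  intro hconv
  have hmid := hconv (x := w) (y := -w) (by simp [hq]) (by simp [hq'])
    (by norm_num : (0 : ℝ) ≤ 1 / 2) (by norm_num : (0 : ℝ) ≤ 1 / 2) (by norm_num)
  rw [show (1 / 2 : ℝ) • w + (1 / 2 : ℝ) • -w = 0 by module] at hmid
  norm_num [splitForm] at hmid

theorem not_convex_setOf_splitForm_lt_one (hP : IsIdempotentElem P) (hrange : P.range ≠ ⊥)
    (hker : P.ker ≠ ⊥) : ¬Convex ℝ {x | splitForm P x < 1} := by
  obtain ⟨w, hwP, hw⟩ := Submodule.exists_mem_norm_eq hrange zero_le_one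
  obtain ⟨v, hv, hv1⟩ := Submodule.exists_mem_norm_eq hker zero_le_one
  have hPw : P w = w := hP.apply_of_mem_range hwP
  have hPv : P v = 0 := hv
  have hq : splitForm P (w + v) = 0 := by rw [splitForm_add hPw hPv, hw, hv1]; norm_num
  have hq' : splitForm P (w + -v) = 0 := by
    rw [splitForm_add hPw (by rw [map_neg, hPv, neg_zero]), norm_neg, hw, hv1]; norm_num
  intro hconv
  have hmid := hconv (x := w + v) (y := w + -v) (by simp [hq]) (by simp [hq'])
    (by norm_num : (0 : ℝ) ≤ 1 / 2) (by norm_num : (0 : ℝ) ≤ 1 / 2) (by norm_num)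
  rw [show (1 / 2 : ℝ) • (w + v) + (1 / 2 : ℝ) • (w + -v) = w by module] at hmid
  change splitForm P w < 1 at hmid
  rw [splitForm_of_apply_eq_self hPw, hw] at hmid
  norm_num at hmid

theorem componentsIn_compl_setOf_splitForm_eq_one (hP : IsIdempotentElem P)
    (hrank : 1 < Module.rank ℝ P.range) :
    componentsIn {x | splitForm P x = 1}ᶜ = {{x | splitForm P x < 1}, {x | 1 < splitForm P x}} := by
  have hcompl : {x | splitForm P x = 1}ᶜ = {x | splitForm P x < 1} ∪ {x | 1 < splitForm P x} := by
    ext x; exact ne_iff_lt_or_gt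
  obtain ⟨w, hwP, hw⟩ :=
    Submodule.exists_mem_norm_eq (Submodule.ne_bot_of_one_lt_rank hrank) zero_le_two
  rw [hcompl]
  refine componentsIn_union_eq_pair_of_isOpen (isOpen_lt continuous_splitForm continuous_const)
    (isOpen_lt continuous_const continuous_splitForm) ?_
    ((starConvex_setOf_splitForm_lt one_pos).isPathConnected ?_).isConnected
    ⟨⟨w, ?_⟩, isPreconnected_setOf_one_lt_splitForm hP hrank⟩
  · exact disjoint_left.2 fun x (h1 : splitForm P x < 1) h2 => lt_asymm h1 h2
  · simp [splitForm]
  · show 1 < splitForm P w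
    rw [splitForm_of_apply_eq_self (hP.apply_of_mem_range hwP), hw]; norm_num

end SplitForm

section Coordinates

variable {n : ℕ}

def headProj (n k : ℕ) : En n →L[ℝ] En n :=
  Matrix.toEuclideanCLM (𝕜 := ℝ) (n := Fin n)
    (Matrix.diagonal fun i : Fin n => if (i : ℕ) < k then 1 else 0)

@[simp]
theorem headProj_apply (k : ℕ) (x : En n) (i : Fin n) :
    headProj n k x i = if (i : ℕ) < k then x i else 0 := by
  simp [headProj, Matrix.mulVec_diagonal]

theorem isIdempotentElem_headProj (k : ℕ) : IsIdempotentElem (headProj n k) := by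
  ext x i
  by_cases h : (i : ℕ) < k <;> simp [h]

theorem splitForm_headProj (k : ℕ) (x : En n) :
    splitForm (headProj n k) x =
      (∑ i ∈ Finset.univ.filter (fun i : Fin n => (i : ℕ) < k), x i ^ 2) -
      (∑ i ∈ Finset.univ.filter (fun i : Fin n => k ≤ (i : ℕ)), x i ^ 2) := by
  simp only [splitForm, EuclideanSpace.norm_sq_eq, Real.norm_eq_abs, sq_abs, Finset.sum_filter]
  congr 1 <;> refine Finset.sum_congr rfl fun i _ => ?_ <;> by_cases h : (i : ℕ) < k <;> simp [h]

theorem one_lt_rank_range_headProj {k : ℕ} (hk : 2 ≤ k) (hkn : k ≤ n) :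
    1 < Module.rank ℝ (headProj n k).range := by
  let b : Fin 2 → En n := EuclideanSpace.basisFun (Fin n) ℝ ∘ Fin.castLE (hk.trans hkn)
  let e : Fin 2 → (headProj n k).range := fun j =>
    ⟨b j, b j, by ext i; simp [b, Fin.ext_iff]; omega⟩
  have hb : LinearIndependent ℝ b :=
    (EuclideanSpace.basisFun (Fin n) ℝ).toBasis.linearIndependent.comp _ (Fin.castLE_injective _)
  have hli : LinearIndependent ℝ e := .of_comp (headProj n k).range.subtype hb
  calc (1 : Cardinal) < 2 := Cardinal.one_lt_two
    _ = Cardinal.mk (Fin 2) := by simp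
    _ ≤ _ := hli.cardinal_le_rank

theorem ker_headProj_ne_bot {k : ℕ} (hkn : k < n) : (headProj n k).ker ≠ ⊥ :=
  (Submodule.ne_bot_iff _).2
    ⟨EuclideanSpace.single ⟨k, hkn⟩ 1, by ext i; simp [Fin.ext_iff]; omega, by simp⟩

end Coordinates

theorem components_of_one_sheeted_hyperboloid_general
    {n k : ℕ} (hk2 : 2 ≤ k) (hkn : k ≤ n - 1)
    (Q C₁ C₂ : Set (En n))
    (hQ : Q = {x : En n |
      (∑ i ∈ Finset.univ.filter (fun i : Fin n => (i : ℕ) < k), x i ^ 2) -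
      (∑ i ∈ Finset.univ.filter (fun i : Fin n => k ≤ (i : ℕ)), x i ^ 2) = 1})
    (hC₁ : C₁ = {x : En n |
      (∑ i ∈ Finset.univ.filter (fun i : Fin n => (i : ℕ) < k), x i ^ 2) -
      (∑ i ∈ Finset.univ.filter (fun i : Fin n => k ≤ (i : ℕ)), x i ^ 2) < 1})
    (hC₂ : C₂ = {x : En n |
      1 < (∑ i ∈ Finset.univ.filter (fun i : Fin n => (i : ℕ) < k), x i ^ 2) -
      (∑ i ∈ Finset.univ.filter (fun i : Fin n => k ≤ (i : ℕ)), x i ^ 2)}) :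
    componentsIn Qᶜ = {C₁, C₂} ∧ C₁ ≠ C₂ ∧ ¬ Convex ℝ C₁ ∧ ¬ Convex ℝ C₂ := by
  set P := headProj n k
  have hP : IsIdempotentElem P := isIdempotentElem_headProj k
  have hrank : 1 < Module.rank ℝ P.range := one_lt_rank_range_headProj hk2 (by omega)
  have hrange : P.range ≠ ⊥ := Submodule.ne_bot_of_one_lt_rank hrank
  simp only [← splitForm_headProj] at hQ hC₁ hC₂
  subst hQ hC₁ hC₂
  refine ⟨componentsIn_compl_setOf_splitForm_eq_one hP hrank, fun h => ?_,
    not_convex_setOf_splitForm_lt_one hP hrange (ker_headProj_ne_bot (by omega)),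
    not_convex_setOf_one_lt_splitForm hP hrange⟩
  have h0 : (0 : En n) ∈ {x | splitForm P x < 1} := by simp [splitForm]
  rw [h] at h0
  norm_num [splitForm] at h0

/-- for n ≥ 3 and 2 ≤ k ≤ n − 1, the complement of the hyperboloid
Q = {x : x₁² + ⋯ + x_k² − x_{k+1}² − ⋯ − xₙ² = 1} has exactly two connected components,
and neither of them is convex. -/
theorem components_of_one_sheeted_hyperboloid
    {n k : ℕ} (hn : 3 ≤ n) (hk2 : 2 ≤ k) (hkn : k ≤ n - 1)
    (Q C₁ C₂ : Set (En n))
    (hQ : Q = {x : En n |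
      (∑ i ∈ Finset.univ.filter (fun i : Fin n => (i : ℕ) < k), x i ^ 2) -
      (∑ i ∈ Finset.univ.filter (fun i : Fin n => k ≤ (i : ℕ)), x i ^ 2) = 1})
    (hC₁ : C₁ = {x : En n |
      (∑ i ∈ Finset.univ.filter (fun i : Fin n => (i : ℕ) < k), x i ^ 2) -
      (∑ i ∈ Finset.univ.filter (fun i : Fin n => k ≤ (i : ℕ)), x i ^ 2) < 1})
    (hC₂ : C₂ = {x : En n |
      1 < (∑ i ∈ Finset.univ.filter (fun i : Fin n => (i : ℕ) < k), x i ^ 2) -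
      (∑ i ∈ Finset.univ.filter (fun i : Fin n => k ≤ (i : ℕ)), x i ^ 2)}) :
    componentsIn Qᶜ = {C₁, C₂} ∧ C₁ ≠ C₂ ∧ ¬ Convex ℝ C₁ ∧ ¬ Convex ℝ C₂ :=
  components_of_one_sheeted_hyperboloid_general hk2 hkn Q C₁ C₂ hQ hC₁ hC₂
end
end

section
/- Let n ≥ 4 and 2 ≤ k ≤ n − 2, and let Q = {x ∈ ℝⁿ : x₁² + ⋯ + x_k² = x_{k+1}² + ⋯ + xₙ²}. Then ℝⁿ \ Q has exactly two connected components, namely {x : x₁² + ⋯ + x_k² > x_{k+1}² + ⋯ + xₙ²} and {x : x₁² + ⋯ + x_k² < x_{k+1}² + ⋯ + xₙ²}, and neither of these two components is convex. -/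
open Set Metric

noncomputable section

/-!
The complement of the cone is the disjoint union of the two open sets on which the squared
mass of the coordinates in `s = {i < k}` exceeds, resp. falls short of, the mass on `sᶜ`, so it
suffices that each of them is connected. A point `x` of the first set is joined by a segment,
along which only the coordinates outside `s` shrink, to its projection onto `ℝ^s`; and
`ℝ^s \ {0}` lies in the set and is path-connected because `|s| ≥ 2`. The second set is the same
with `s` and `sᶜ` exchanged. Neither set is convex: both are symmetric under `x ↦ -x` but miss
the origin.
-/

theorem not_convex_of_neg_mem {E : Type*} [AddCommGroup E] [Module ℝ E] {s : Set E}
    (hs : s.Nonempty) (h0 : (0 : E) ∉ s) (hneg : ∀ x ∈ s, -x ∈ s) : ¬ Convex ℝ s := by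
  obtain ⟨x, hx⟩ := hs
  exact fun hconv => h0 (midpoint_self_neg ℝ x ▸ hconv.midpoint_mem hx (hneg x hx))

theorem IsPathConnected.of_forall_joinedIn_mem {X : Type*} [TopologicalSpace X] {T F : Set X}
    (hT : IsPathConnected T) (hTF : T ⊆ F) (h : ∀ x ∈ F, ∃ y ∈ T, JoinedIn F x y) :
    IsPathConnected F := by
  obtain ⟨t, htT, ht⟩ := hT
  refine ⟨t, hTF htT, fun {x} hx => ?_⟩
  obtain ⟨y, hyT, hxy⟩ := h x hx
  exact ((ht hyT).mono hTF).trans hxy.symm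

theorem connectedComponentIn_union_eq_left_s8 {X : Type*} [TopologicalSpace X] {U V : Set X}
    (hU : IsOpen U) (hV : IsOpen V) (hUV : Disjoint U V) (hpc : IsPreconnected U) {x : X}
    (hx : x ∈ U) : connectedComponentIn (U ∪ V) x = U :=
  (isPreconnected_connectedComponentIn.subset_left_of_subset_union hU hV hUV
      (connectedComponentIn_subset _ _) ⟨x, mem_connectedComponentIn (.inl hx), hx⟩).antisymm
    (hpc.subset_connectedComponentIn hx subset_union_left)

theorem componentsIn_union_eq {X : Type*} [TopologicalSpace X] {U V : Set X}
    (hU : IsOpen U) (hV : IsOpen V) (hUV : Disjoint U V) (hU' : IsConnected U)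
    (hV' : IsConnected V) : componentsIn (U ∪ V) = {U, V} := by
  have hcU {x} (hx : x ∈ U) := connectedComponentIn_union_eq_left_s8 hU hV hUV hU'.2 hx
  have hcV {x} (hx : x ∈ V) : connectedComponentIn (U ∪ V) x = V := by
    rw [union_comm]
    exact connectedComponentIn_union_eq_left_s8 hV hU hUV.symm hV'.2 hx
  ext C
  constructor
  · rintro ⟨x, hx | hx, rfl⟩
    exacts [.inl (hcU hx), .inr (hcV hx)]
  · rintro (rfl | rfl)
    · obtain ⟨x, hx⟩ := hU'.1
      exact ⟨x, .inl hx, (hcU hx).symm⟩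
    · obtain ⟨x, hx⟩ := hV'.1
      exact ⟨x, .inr hx, (hcV hx).symm⟩

namespace EuclideanSpace

theorem sum_sq_eq_norm_sq {ι : Type*} (s : Finset ι) (x : EuclideanSpace ℝ ι) :
    ∑ i ∈ s, x i ^ 2 = ‖(WithLp.toLp 2 fun j : s => x j : EuclideanSpace ℝ s)‖ ^ 2 := by
  rw [EuclideanSpace.real_norm_sq_eq, ← Finset.sum_coe_sort s]

variable {ι : Type*} [DecidableEq ι]

def extendByZero (s : Finset ι) (y : EuclideanSpace ℝ s) : EuclideanSpace ℝ ι :=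
  WithLp.toLp 2 fun i => if h : i ∈ s then y ⟨i, h⟩ else 0

theorem extendByZero_apply_of_mem {s : Finset ι} (y : EuclideanSpace ℝ s) {i : ι} (hi : i ∈ s) :
    extendByZero s y i = y ⟨i, hi⟩ := dif_pos hi

theorem extendByZero_apply_of_notMem {s : Finset ι} (y : EuclideanSpace ℝ s) {i : ι}
    (hi : i ∉ s) : extendByZero s y i = 0 := dif_neg hi

theorem continuous_extendByZero (s : Finset ι) : Continuous (extendByZero s) := by
  refine (PiLp.continuous_toLp 2 _).comp (continuous_pi fun i => ?_)
  by_cases hi : i ∈ s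
  · simp only [dif_pos hi]
    fun_prop
  · simpa only [dif_neg hi] using continuous_const

end EuclideanSpace

open EuclideanSpace

section DominantCone

variable {ι : Type*} [Fintype ι] [DecidableEq ι]

def dominantCone (s : Finset ι) : Set (EuclideanSpace ℝ ι) :=
  {x | ∑ i ∈ sᶜ, x i ^ 2 < ∑ i ∈ s, x i ^ 2}

variable {s : Finset ι} {x : EuclideanSpace ℝ ι}

theorem isOpen_dominantCone (s : Finset ι) : IsOpen (dominantCone s) :=
  isOpen_lt (by fun_prop) (by fun_prop)

theorem disjoint_dominantCone_compl (s : Finset ι) :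
    Disjoint (dominantCone s) (dominantCone sᶜ) := by
  refine Set.disjoint_left.2 fun x h₁ h₂ => ?_
  simp only [dominantCone, mem_ofPred_eq, compl_compl] at h₁ h₂
  exact h₁.asymm h₂

theorem compl_setOf_sum_sq_eq (s : Finset ι) :
    {x : EuclideanSpace ℝ ι | ∑ i ∈ s, x i ^ 2 = ∑ i ∈ sᶜ, x i ^ 2}ᶜ =
      dominantCone s ∪ dominantCone sᶜ := by
  ext x
  simp only [dominantCone, mem_compl_iff, mem_union, mem_ofPred_eq, compl_compl]
  exact ne_iff_lt_or_gt.trans Or.comm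

theorem zero_notMem_dominantCone : (0 : EuclideanSpace ℝ ι) ∉ dominantCone s := by
  simp [dominantCone]

theorem neg_mem_dominantCone (hx : x ∈ dominantCone s) : -x ∈ dominantCone s := by
  simpa [dominantCone] using hx

theorem mem_dominantCone_of_sq_le {z : EuclideanSpace ℝ ι} (hx : x ∈ dominantCone s)
    (hs : ∀ i ∈ s, x i ^ 2 ≤ z i ^ 2) (hsc : ∀ i ∈ sᶜ, z i ^ 2 ≤ x i ^ 2) :
    z ∈ dominantCone s :=
  ((Finset.sum_le_sum hsc).trans_lt hx).trans_le (Finset.sum_le_sum hs)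

theorem extendByZero_mem_dominantCone {y : EuclideanSpace ℝ s} (hy : y ≠ 0) :
    extendByZero s y ∈ dominantCone s := by
  have hoff : ∑ i ∈ sᶜ, extendByZero s y i ^ 2 = 0 := Finset.sum_eq_zero fun i hi => by
    rw [extendByZero_apply_of_notMem y (Finset.mem_compl.1 hi), sq, mul_zero]
  have hrestrict : (WithLp.toLp 2 fun j : s => extendByZero s y j) = y := by
    ext j
    exact extendByZero_apply_of_mem y j.2
  rw [dominantCone, mem_ofPred_eq, hoff, sum_sq_eq_norm_sq, hrestrict]
  positivity

theorem restrict_ne_zero_of_mem_dominantCone (hx : x ∈ dominantCone s) :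
    (WithLp.toLp 2 fun j : s => x j : EuclideanSpace ℝ s) ≠ 0 := by
  intro h
  have hpos := (Finset.sum_nonneg fun i _ => sq_nonneg (x i)).trans_lt hx
  rw [sum_sq_eq_norm_sq, h, norm_zero] at hpos
  simp at hpos

theorem segment_subset_dominantCone (hx : x ∈ dominantCone s) :
    segment ℝ x (extendByZero s (WithLp.toLp 2 fun j : s => x j)) ⊆ dominantCone s := by
  rintro _ ⟨a, b, ha, hb, hab, rfl⟩
  refine mem_dominantCone_of_sq_le hx (fun i hi => ?_) (fun i hi => ?_)
  · simp [extendByZero_apply_of_mem _ hi, ← add_mul, hab]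
  · have ha1 : a ≤ 1 := by linarith
    simp only [PiLp.add_apply, PiLp.smul_apply, smul_eq_mul,
      extendByZero_apply_of_notMem _ (Finset.mem_compl.1 hi), mul_zero, add_zero, mul_pow]
    exact mul_le_of_le_one_left (sq_nonneg _) (pow_le_one₀ ha ha1)

theorem isPathConnected_dominantCone (hs : 1 < s.card) : IsPathConnected (dominantCone s) := by
  have hrank : 1 < Module.rank ℝ (EuclideanSpace ℝ s) := by
    rw [← Module.finrank_eq_rank, finrank_euclideanSpace, Fintype.card_coe]
    exact_mod_cast hs
  refine ((isPathConnected_compl_singleton_of_one_lt_rank hrank 0).image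
    (continuous_extendByZero s)).of_forall_joinedIn_mem ?_ fun x hx =>
      ⟨_, mem_image_of_mem _ (restrict_ne_zero_of_mem_dominantCone hx),
        .of_segment_subset (segment_subset_dominantCone hx)⟩
  rintro _ ⟨y, hy, rfl⟩
  exact extendByZero_mem_dominantCone hy

end DominantCone

theorem Fin.compl_filter_val_lt (n k : ℕ) :
    (Finset.univ.filter fun i : Fin n => (i : ℕ) < k)ᶜ =
      Finset.univ.filter fun i : Fin n => k ≤ (i : ℕ) := by
  simp only [Finset.compl_filter, not_lt]

theorem components_of_nonconvex_cone_general
    {n k : ℕ} (hk2 : 2 ≤ k) (hkn : k ≤ n - 2)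
    (Q C₁ C₂ : Set (En n))
    (hQ : Q = {x : En n |
      (∑ i ∈ Finset.univ.filter (fun i : Fin n => (i : ℕ) < k), x i ^ 2) =
      (∑ i ∈ Finset.univ.filter (fun i : Fin n => k ≤ (i : ℕ)), x i ^ 2)})
    (hC₁ : C₁ = {x : En n |
      (∑ i ∈ Finset.univ.filter (fun i : Fin n => k ≤ (i : ℕ)), x i ^ 2) <
      (∑ i ∈ Finset.univ.filter (fun i : Fin n => (i : ℕ) < k), x i ^ 2)})
    (hC₂ : C₂ = {x : En n |
      (∑ i ∈ Finset.univ.filter (fun i : Fin n => (i : ℕ) < k), x i ^ 2) <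
      (∑ i ∈ Finset.univ.filter (fun i : Fin n => k ≤ (i : ℕ)), x i ^ 2)}) :
    componentsIn Qᶜ = {C₁, C₂} ∧ C₁ ≠ C₂ ∧ ¬ Convex ℝ C₁ ∧ ¬ Convex ℝ C₂ := by
  set s := Finset.univ.filter fun i : Fin n => (i : ℕ) < k
  rw [← Fin.compl_filter_val_lt] at hQ hC₁ hC₂
  replace hC₂ : C₂ = dominantCone sᶜ := by rw [hC₂, dominantCone, compl_compl]
  subst hQ hC₁ hC₂
  have hs : 1 < s.card := Finset.one_lt_card_iff.2
    ⟨⟨0, by omega⟩, ⟨1, by omega⟩, by simp only [s, Finset.mem_filter_univ]; omega, by simp only [s, Finset.mem_filter_univ]; omega, by simp⟩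
  have hsc : 1 < sᶜ.card := Finset.one_lt_card_iff.2
    ⟨⟨k, by omega⟩, ⟨k + 1, by omega⟩, by simp [s], by simp [s], by simp⟩
  have hC₁ := isPathConnected_dominantCone hs
  have hC₂ := isPathConnected_dominantCone hsc
  refine ⟨?_, (disjoint_dominantCone_compl s).ne hC₁.nonempty.ne_empty,
    not_convex_of_neg_mem hC₁.nonempty zero_notMem_dominantCone fun _ => neg_mem_dominantCone,
    not_convex_of_neg_mem hC₂.nonempty zero_notMem_dominantCone fun _ => neg_mem_dominantCone⟩
  rw [compl_setOf_sum_sq_eq]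
  exact componentsIn_union_eq (isOpen_dominantCone _) (isOpen_dominantCone _)
    (disjoint_dominantCone_compl s) hC₁.isConnected hC₂.isConnected

/-- for n ≥ 4 and 2 ≤ k ≤ n − 2, the complement of the cone
Q = {x : x₁² + ⋯ + x_k² = x_{k+1}² + ⋯ + xₙ²} has exactly two connected components,
and neither of them is convex. -/
theorem components_of_nonconvex_cone
    {n k : ℕ} (hn : 4 ≤ n) (hk2 : 2 ≤ k) (hkn : k ≤ n - 2)
    (Q C₁ C₂ : Set (En n))
    (hQ : Q = {x : En n |
      (∑ i ∈ Finset.univ.filter (fun i : Fin n => (i : ℕ) < k), x i ^ 2) =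
      (∑ i ∈ Finset.univ.filter (fun i : Fin n => k ≤ (i : ℕ)), x i ^ 2)})
    (hC₁ : C₁ = {x : En n |
      (∑ i ∈ Finset.univ.filter (fun i : Fin n => k ≤ (i : ℕ)), x i ^ 2) <
      (∑ i ∈ Finset.univ.filter (fun i : Fin n => (i : ℕ) < k), x i ^ 2)})
    (hC₂ : C₂ = {x : En n |
      (∑ i ∈ Finset.univ.filter (fun i : Fin n => (i : ℕ) < k), x i ^ 2) <
      (∑ i ∈ Finset.univ.filter (fun i : Fin n => k ≤ (i : ℕ)), x i ^ 2)}) :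
    componentsIn Qᶜ = {C₁, C₂} ∧ C₁ ≠ C₂ ∧ ¬ Convex ℝ C₁ ∧ ¬ Convex ℝ C₂ :=
  components_of_nonconvex_cone_general hk2 hkn Q C₁ C₂ hQ hC₁ hC₂
end
end

section
/- Let n ≥ 3 and let K ⊆ ℝⁿ be a closed convex set with nonempty interior, K ≠ ℝⁿ, containing no affine line. Let δ : S^{n−1} → ℝ be continuous, H(u) = {x ∈ ℝⁿ : ⟨x, u⟩ = δ(u)}, and assume that for every u ∈ S^{n−1} the set frontier K ∩ H(u) is an (n−1)-dimensional convex quadric in H(u). Then for every (n−2)-dimensional affine subspace L ⊆ ℝⁿ that supports K (i.e., L ∩ K ≠ ∅ and L ∩ interior K = ∅), there exists u ∈ S^{n−1} such that L ⊆ H(u). -/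
open Set Metric RealInnerProductSpace

noncomputable section

/-- `S` is an (n−1)-dimensional convex quadric in the hyperplane `H ⊆ ℝⁿ`:
for some affine isometry φ : ℝ^{n−1} → ℝⁿ with image `H`, the set φ⁻¹(S) is a
convex quadric in ℝ^{n−1}. -/
def IsConvexQuadricIn {n : ℕ} (H S : Set (En n)) : Prop :=
  S ⊆ H ∧ ∃ φ : En (n - 1) →ᵃⁱ[ℝ] En n,
    Set.range (φ : En (n - 1) → En n) = H ∧ IsConvexQuadric ((φ : En (n - 1) → En n) ⁻¹' S)

/-- The hyperplane H(u) = {x : ⟨x, u⟩ = δ(u)} associated to a unit vector u. -/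
def sphHyp {n : ℕ} (δ : sphere (0 : En n) 1 → ℝ) (u : sphere (0 : En n) 1) : Set (En n) :=
  {x : En n | ⟪x, (u : En n)⟫ = δ u}
/-- `K` contains no affine line. -/
def LineFree {n : ℕ} (K : Set (En n)) : Prop :=
  ¬ ∃ (p v : En n), v ≠ 0 ∧ ∀ t : ℝ, p + t • v ∈ K

/-!
If some `H(u)` missed the interior of `K`, the section `frontier K ∩ H(u) = K ∩ H(u)` would be
convex. A convex quadric bounds an open convex set `U`; if its frontier is convex too, it has
empty interior and so lies in an affine hyperplane, and connectedness of the two open half-spaces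
forces `U` to be one of them. Its frontier is then a hyperplane of `H(u)`, which (as `n ≥ 3`)
contains a line of `K`. Hence every `H(u)` meets `int K`.

Separating `L` from `int K` gives a unit normal `v` of `L` with `⟪x, v⟫ < ⟪p, v⟫` on `int K`,
for a fixed `p ∈ L`. Then `⟪p, u⟫ - δ u` is positive at `u = v` and negative at `u = -v`, so it
vanishes somewhere on the (connected) circle of unit normals of `L`, and there `L ⊆ H(u)`.
-/

theorem IsPreconnected.subset_or_subset_compl_of_disjoint_frontier {X : Type*}
    [TopologicalSpace X] {s U : Set X} (hs : IsPreconnected s) (hU : IsOpen U)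
    (hsU : Disjoint s (frontier U)) : s ⊆ U ∨ s ⊆ Uᶜ := by
  have hcover : s ⊆ U ∪ (closure U)ᶜ := fun x hx => by
    by_cases hxU : x ∈ closure U
    · rw [closure_eq_self_union_frontier] at hxU
      exact .inl (hxU.resolve_right (disjoint_left.1 hsU hx))
    · exact .inr hxU
  refine (hs.subset_or_subset hU isClosed_closure.isOpen_compl
    (disjoint_compl_right_iff_subset.2 subset_closure) hcover).imp id fun h => ?_
  exact h.trans (compl_subset_compl.2 subset_closure)

section LevelSets

variable {E : Type*} [NormedAddCommGroup E] [NormedSpace ℝ E] [FiniteDimensional ℝ E]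

theorem Convex.exists_linearMap_eq_of_interior_eq_empty {S : Set E} (hS : Convex ℝ S)
    (hint : interior S = ∅) {a : E} (ha : a ∈ S) :
    ∃ f : E →ₗ[ℝ] ℝ, f ≠ 0 ∧ ∀ x ∈ S, f x = f a := by
  have hspan : affineSpan ℝ S ≠ ⊤ := fun h =>
    (hS.interior_nonempty_iff_affineSpan_eq_top.2 h).ne_empty hint
  have hdir : (affineSpan ℝ S).direction < ⊤ := by
    rwa [lt_top_iff_ne_top, Ne,
      AffineSubspace.direction_eq_top_iff_of_nonempty ⟨a, mem_affineSpan ℝ ha⟩]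
  obtain ⟨f, hf0, hfS⟩ := Submodule.exists_dual_map_eq_bot_of_lt_top hdir inferInstance
  refine ⟨f, hf0, fun x hx => ?_⟩
  have hxa : x - a ∈ (affineSpan ℝ S).direction :=
    AffineSubspace.vsub_mem_direction (mem_affineSpan ℝ hx) (mem_affineSpan ℝ ha)
  have hfxa : f (x - a) = 0 := by
    rw [← Submodule.mem_bot ℝ, ← hfS]
    exact Submodule.mem_map_of_mem hxa
  rwa [map_sub, sub_eq_zero] at hfxa

theorem LinearMap.setOf_eq_subset_frontier {f : E →ₗ[ℝ] ℝ} (hf : f ≠ 0) {c : ℝ} {A : Set E}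
    (hlt : {x | f x < c} ⊆ A) (hgt : {x | c < f x} ⊆ Aᶜ) : {x | f x = c} ⊆ frontier A := by
  have hopen := f.isOpenMap_of_finiteDimensional (f.surjective_of_ne_zero hf)
  have hcont := f.continuous_of_finiteDimensional
  intro x hx
  rw [frontier_eq_closure_inter_closure]
  constructor
  · refine closure_mono hlt ?_
    change x ∈ closure (f ⁻¹' Iio c)
    rw [← hopen.preimage_closure_eq_closure_preimage hcont, closure_Iio]
    exact le_of_eq hx
  · refine closure_mono hgt ?_
    change x ∈ closure (f ⁻¹' Ioi c)
    rw [← hopen.preimage_closure_eq_closure_preimage hcont, closure_Ioi]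
    exact ge_of_eq hx

theorem Convex.setOf_eq_subset_frontier {U : Set E} (hUc : Convex ℝ U) (hUo : IsOpen U)
    (hne : U.Nonempty) (hnu : U ≠ univ) {f : E →ₗ[ℝ] ℝ} (hf : f ≠ 0) {c : ℝ}
    (hfr : frontier U ⊆ {x | f x = c}) : {x | f x = c} ⊆ frontier U := by
  have hsurj := f.surjective_of_ne_zero hf
  have hside : ∀ W : Set E, Convex ℝ W → Disjoint W {x | f x = c} → W ⊆ U ∨ W ⊆ Uᶜ :=
    fun W hW hWc => hW.isPreconnected.subset_or_subset_compl_of_disjoint_frontier hUo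
      (hWc.mono_right hfr)
  rcases hside _ (convex_halfSpace_lt f.isLinear c)
    (disjoint_left.2 fun x hlt heq => hlt.ne heq) with hlt | hlt <;>
  rcases hside _ (convex_halfSpace_gt f.isLinear c)
    (disjoint_left.2 fun x hgt heq => hgt.ne' heq) with hgt | hgt
  · refine absurd (eq_univ_of_forall fun x => ?_) hnu
    obtain ⟨y, hy⟩ := hsurj 1
    rcases lt_trichotomy (f x) c with h | h | h
    · exact hlt h
    · -- `x` is the midpoint of `x - y` and `x + y`, which lie on opposite sides.
      have hmid := hUc (hlt (show f (x - y) < c by simp [h, hy]))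
        (hgt (show c < f (x + y) by simp [h, hy])) (by norm_num : (0 : ℝ) ≤ 1 / 2)
        (by norm_num : (0 : ℝ) ≤ 1 / 2) (by norm_num)
      convert hmid using 1
      module
    · exact hgt h
  · exact f.setOf_eq_subset_frontier hf hlt hgt
  · rw [← frontier_compl]
    exact f.setOf_eq_subset_frontier hf hlt (by rwa [compl_compl])
  · have himage : f '' U = {c} := by
      refine (hne.image f).subset_singleton_iff.1 ?_
      rintro _ ⟨x, hx, rfl⟩
      by_contra h
      rcases lt_or_gt_of_ne h with h | h
      exacts [hlt h hx, hgt h hx]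
    exact absurd (himage ▸ f.isOpenMap_of_finiteDimensional hsurj U hUo) (not_isOpen_singleton c)

theorem Convex.exists_line_subset_frontier (hE : 2 ≤ Module.finrank ℝ E) {U : Set E}
    (hUc : Convex ℝ U) (hUo : IsOpen U) (hne : U.Nonempty) (hnu : U ≠ univ)
    (hfc : Convex ℝ (frontier U)) : ∃ p w : E, w ≠ 0 ∧ ∀ t : ℝ, p + t • w ∈ frontier U := by
  obtain ⟨a, ha⟩ := nonempty_frontier_iff.2 ⟨hne, hnu⟩
  have hint : interior (frontier U) = ∅ := by
    rw [← frontier_compl]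
    exact interior_frontier hUo.isClosed_compl
  obtain ⟨f, hf0, hfa⟩ := hfc.exists_linearMap_eq_of_interior_eq_empty hint ha
  have hfr := hUc.setOf_eq_subset_frontier hUo hne hnu hf0 hfa
  have hker : LinearMap.ker f ≠ ⊥ :=
    LinearMap.ker_ne_bot_of_finrank_lt (by rw [Module.finrank_self]; omega)
  obtain ⟨w, hw, hw0⟩ := Submodule.exists_mem_ne_zero_of_ne_bot hker
  refine ⟨a, w, hw0, fun t => hfr ?_⟩
  simp [LinearMap.mem_ker.1 hw]

end LevelSets

theorem LineFree.mono {n : ℕ} {K K' : Set (En n)} (h : K ⊆ K') (hK' : LineFree K') :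
    LineFree K :=
  fun ⟨p, v, hv, hline⟩ => hK' ⟨p, v, hv, fun t => h (hline t)⟩

theorem IsQuadricSurface.isClosed {n : ℕ} {Q : Set (En n)} (hQ : IsQuadricSurface Q) :
    IsClosed Q := by
  obtain ⟨a, b, c, -, -, rfl⟩ := hQ
  exact isClosed_eq (by fun_prop) continuous_const

theorem IsConvexQuadric.not_lineFree_of_convex {m : ℕ} (hm : 2 ≤ m) {S : Set (En m)}
    (hS : IsConvexQuadric S) (hconv : Convex ℝ S) : ¬ LineFree S := by
  obtain ⟨Q, U, ⟨hQ, q, hq⟩, ⟨x, hx, rfl⟩, hUc, rfl⟩ := hS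
  have hUQ : connectedComponentIn Qᶜ x ⊆ Qᶜ := connectedComponentIn_subset _ _
  exact not_not.2 <| hUc.exists_line_subset_frontier (by simpa using hm)
    hQ.isClosed.isOpen_compl.connectedComponentIn ⟨x, mem_connectedComponentIn hx⟩
    (fun h => hUQ (h ▸ mem_univ q) hq) hconv

theorem IsConvexQuadricIn.not_lineFree_of_convex {n : ℕ} (hn : 3 ≤ n) {H S : Set (En n)}
    (hS : IsConvexQuadricIn H S) (hconv : Convex ℝ S) : ¬ LineFree S := by
  obtain ⟨-, φ, -, hφS⟩ := hS
  intro hSlf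
  refine hφS.not_lineFree_of_convex (by omega) (hconv.affine_preimage φ.toAffineMap) ?_
  rintro ⟨p, w, hw, hline⟩
  refine hSlf ⟨φ p, φ.linearIsometry w, (map_ne_zero_iff _ φ.linearIsometry.injective).2 hw,
    fun t => ?_⟩
  have hφline := hline t
  rwa [mem_preimage, add_comm, ← vadd_eq_add, φ.map_vadd, map_smul, vadd_eq_add, add_comm]
    at hφline

theorem LineFree.interior_inter_nonempty {n : ℕ} (hn : 3 ≤ n) {K H : Set (En n)}
    (hKlf : LineFree K) (hKconv : Convex ℝ K) (hKcl : IsClosed K) (hH : Convex ℝ H)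
    (hsec : IsConvexQuadricIn H (frontier K ∩ H)) : (interior K ∩ H).Nonempty := by
  by_contra hdisj
  have hfr : frontier K ∩ H = K ∩ H := by
    rw [hKcl.frontier_eq]
    ext x
    exact ⟨fun ⟨⟨hK, _⟩, hx⟩ => ⟨hK, hx⟩, fun ⟨hK, hx⟩ => ⟨⟨hK, fun hi => hdisj ⟨x, hi, hx⟩⟩, hx⟩⟩
  refine hsec.not_lineFree_of_convex hn (hfr ▸ hKconv.inter hH) (hKlf.mono ?_)
  exact hfr ▸ inter_subset_left

theorem convex_sphHyp {n : ℕ} (δ : sphere (0 : En n) 1 → ℝ) (u : sphere (0 : En n) 1) :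
    Convex ℝ (sphHyp δ u) := by
  simpa [sphHyp, real_inner_comm] using convex_hyperplane (innerSL ℝ (u : En n)).isLinear (δ u)

theorem AffineSubspace.apply_direction_eq_zero_of_forall_le {E : Type*} [AddCommGroup E]
    [Module ℝ E] {L : AffineSubspace ℝ E} {p : E} (hp : p ∈ L) (f : E →ₗ[ℝ] ℝ) {c : ℝ}
    (hf : ∀ y ∈ L, c ≤ f y) {d : E} (hd : d ∈ L.direction) : f d = 0 := by
  by_contra hfd
  have hmem : ((c - f p - 1) / f d) • d +ᵥ p ∈ L :=
    L.vadd_mem_of_mem_direction (L.direction.smul_mem _ hd) hp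
  have hle := hf _ hmem
  rw [vadd_eq_add, map_add, map_smul, smul_eq_mul, div_mul_cancel₀ _ hfd] at hle
  linarith

section InnerProduct

variable {F : Type*} [NormedAddCommGroup F] [InnerProductSpace ℝ F]

theorem AffineSubspace.inner_eq_of_mem_orthogonal {L : AffineSubspace ℝ F} {p y : F}
    (hp : p ∈ L) (hy : y ∈ L) {u : F} (hu : u ∈ L.directionᗮ) : ⟪y, u⟫ = ⟪p, u⟫ := by
  have h := (Submodule.mem_orthogonal _ u).1 hu (y - p) (L.vsub_mem_direction hy hp)
  rwa [inner_sub_left, sub_eq_zero] at h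

theorem AffineSubspace.exists_unit_orthogonal_separating [CompleteSpace F] {A : Set F}
    (hAc : Convex ℝ A) (hAo : IsOpen A) (hAne : A.Nonempty) {L : AffineSubspace ℝ F}
    (hAL : Disjoint A L) {p : F} (hp : p ∈ L) :
    ∃ v : F, ‖v‖ = 1 ∧ v ∈ L.directionᗮ ∧ ∀ x ∈ A, ⟪x, v⟫ < ⟪p, v⟫ := by
  obtain ⟨f, c, hfA, hfL⟩ := geometric_hahn_banach_open hAc hAo L.convex hAL
  set w := (InnerProductSpace.toDual ℝ F).symm f
  have hw : ∀ x, ⟪x, w⟫ = f x := fun x => by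
    rw [real_inner_comm]; exact InnerProductSpace.toDual_symm_apply
  obtain ⟨x₀, hx₀⟩ := hAne
  have hw0 : w ≠ 0 := by
    intro h
    have := (hfA x₀ hx₀).trans_le (hfL p hp)
    rw [← hw, ← hw, h, inner_zero_right, inner_zero_right] at this
    exact lt_irrefl _ this
  refine ⟨‖w‖⁻¹ • w, norm_smul_inv_norm hw0, ?_, fun x hx => ?_⟩
  · refine L.directionᗮ.smul_mem _ ((Submodule.mem_orthogonal' _ _).2 fun d hd => ?_)
    rw [real_inner_comm, hw]
    exact L.apply_direction_eq_zero_of_forall_le hp f hfL hd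
  · rw [real_inner_smul_right, real_inner_smul_right, hw, hw]
    exact mul_lt_mul_of_pos_left ((hfA x hx).trans_le (hfL p hp)) (by positivity)

end InnerProduct

theorem Submodule.exists_mem_sphere_eq_zero {E : Type*} [NormedAddCommGroup E]
    [NormedSpace ℝ E] {V : Submodule ℝ E} (hV : 1 < Module.rank ℝ V)
    {g : sphere (0 : E) 1 → ℝ} (hg : Continuous g) {a b : sphere (0 : E) 1}
    (ha : (a : E) ∈ V) (hb : (b : E) ∈ V) (hga : g a ≤ 0) (hgb : 0 ≤ g b) :
    ∃ u : sphere (0 : E) 1, (u : E) ∈ V ∧ g u = 0 := by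
  have := Subtype.preconnectedSpace (isConnected_sphere hV (0 : V) zero_le_one).isPreconnected
  let ψ : sphere (0 : V) 1 → sphere (0 : E) 1 := fun x => ⟨x.1, x.2⟩
  have hψ : Continuous ψ := by fun_prop
  let lift (u : sphere (0 : E) 1) (hu : (u : E) ∈ V) : sphere (0 : V) 1 :=
    ⟨⟨u, hu⟩, u.2⟩
  obtain ⟨x, hx⟩ := intermediate_value_univ (lift a ha) (lift b hb) (hg.comp hψ) ⟨hga, hgb⟩
  exact ⟨ψ x, x.1.2, hx⟩

theorem supporting_plane_lies_in_some_section_hyperplane_general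
    {n : ℕ} (hn : 3 ≤ n) (K : Set (En n)) (hKconv : Convex ℝ K) (hKcl : IsClosed K)
    (hKint : (interior K).Nonempty) (hKlf : LineFree K)
    (δ : sphere (0 : En n) 1 → ℝ) (hδ : Continuous δ)
    (hsec : ∀ u : sphere (0 : En n) 1,
      IsConvexQuadricIn (sphHyp δ u) (frontier K ∩ sphHyp δ u)) :
    ∀ L : AffineSubspace ℝ (En n), Module.finrank ℝ L.direction = n - 2 →
      ((L : Set (En n)) ∩ K).Nonempty → (L : Set (En n)) ∩ interior K = ∅ →
      ∃ u : sphere (0 : En n) 1, (L : Set (En n)) ⊆ sphHyp δ u := by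
  rintro L hdim ⟨p, hpL, -⟩ hdisj
  obtain ⟨v, hv1, hvL, hsep⟩ := L.exists_unit_orthogonal_separating hKconv.interior
    isOpen_interior hKint (disjoint_iff_inter_eq_empty.2 (by rwa [inter_comm])) hpL
  have hmeet u := hKlf.interior_inter_nonempty hn hKconv hKcl (convex_sphHyp δ u) (hsec u)
  let nv : sphere (0 : En n) 1 := ⟨-v, by simpa using hv1⟩
  let pv : sphere (0 : En n) 1 := ⟨v, by simpa using hv1⟩
  obtain ⟨x, hxK, hx : ⟪x, -v⟫ = δ nv⟩ := hmeet nv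
  obtain ⟨y, hyK, hy : ⟪y, v⟫ = δ pv⟩ := hmeet pv
  have hrank : 1 < Module.rank ℝ L.directionᗮ := by
    have h := L.direction.finrank_add_finrank_orthogonal
    rw [hdim, finrank_euclideanSpace_fin] at h
    rw [← Module.finrank_eq_rank]
    exact_mod_cast (by omega : 1 < Module.finrank ℝ L.directionᗮ)
  obtain ⟨u, huL, hu⟩ := Submodule.exists_mem_sphere_eq_zero hrank
    (g := fun u => ⟪p, (u : En n)⟫ - δ u) (by fun_prop) (a := nv) (b := pv) (neg_mem hvL) hvL
    (show ⟪p, -v⟫ - δ nv ≤ 0 by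
      rw [← hx, inner_neg_right, inner_neg_right]; linarith [hsep x hxK])
    (show 0 ≤ ⟪p, v⟫ - δ pv by rw [← hy]; linarith [hsep y hyK])
  exact ⟨u, fun z hz => (L.inner_eq_of_mem_orthogonal hpL hz huL).trans (sub_eq_zero.1 hu)⟩

/-- Lemma 5: under the hypotheses of Theorem 2 with K line-free, every
(n−2)-dimensional affine subspace L supporting K is contained in some hyperplane H(u). -/
theorem supporting_plane_lies_in_some_section_hyperplane
    {n : ℕ} (hn : 3 ≤ n) (K : Set (En n)) (hKconv : Convex ℝ K) (hKcl : IsClosed K)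
    (hKint : (interior K).Nonempty) (hKne : K ≠ Set.univ) (hKlf : LineFree K)
    (δ : sphere (0 : En n) 1 → ℝ) (hδ : Continuous δ)
    (hsec : ∀ u : sphere (0 : En n) 1,
      IsConvexQuadricIn (sphHyp δ u) (frontier K ∩ sphHyp δ u)) :
    ∀ L : AffineSubspace ℝ (En n), Module.finrank ℝ L.direction = n - 2 →
      ((L : Set (En n)) ∩ K).Nonempty → (L : Set (En n)) ∩ interior K = ∅ →
      ∃ u : sphere (0 : En n) 1, (L : Set (En n)) ⊆ sphHyp δ u :=
  supporting_plane_lies_in_some_section_hyperplane_general hn K hKconv hKcl hKint hKlf δ hδ hsec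
end
end

section
/- Let n ≥ 3 and let E₁ and E₂ be (n−1)-dimensional ellipsoids in ℝⁿ lying, respectively, in hyperplanes H₁ and H₂ of ℝⁿ, such that E₁ ∩ E₂ is an (n−2)-dimensional ellipsoid. Then for every point v ∈ ℝⁿ \ (H₁ ∪ H₂) there exists a real quadric surface Q ⊆ ℝⁿ with {v} ∪ E₁ ∪ E₂ ⊆ Q. -/
open Set Metric RealInnerProductSpace

noncomputable section

/-- A k-dimensional ellipsoid in ℝⁿ: the image of the unit sphere of ℝ^k under an
injective affine map ℝ^k → ℝⁿ. -/
def IsEllipsoidDim {n : ℕ} (k : ℕ) (S : Set (En n)) : Prop :=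
  ∃ f : En k →ᵃ[ℝ] En n, Function.Injective f ∧ S = f '' sphere (0 : En k) 1

/-!
Write `Hᵢ = {Lᵢ = 0}` with `Lᵢ` affine, and let `gᵢ` be affine left inverses of the
parametrisations `fᵢ` of `Eᵢ`. The cylinder `‖g₁ x‖² = 1` over `E₁`, read on `H₂` through `f₂`,
is a quadric of `ℝⁿ⁻¹` through the `(n-2)`-ellipsoid `f₂⁻¹(E₁ ∩ E₂)`, which is the unit sphere cut
by the hyperplane `φ = L₁ ∘ f₂ = 0`. A quadratic function vanishing on the unit sphere of a space
is a multiple of `‖z‖² - 1`, so on `φ = 0` that quadric and the unit sphere are proportional, and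
a combination `a (‖g₁ f₂ y‖² - 1) - b (‖y‖² - 1)` vanishing on `φ = 0` is `φ · ψ` with `ψ` affine.
Then `a (‖g₁ x‖² - 1) - L₁ x · ψ (g₂ x)` vanishes on `E₁ ∪ E₂`; adding a multiple of `L₁ L₂`
makes it vanish at `v` without changing its quadratic part in the directions of `H₁`, where it is
`a ‖g₁ x‖²`. If `E₂ ⊆ H₁`, the hyperplane pair `L₁ (L₁ - L₁ v) = 0` does.
-/

section QuadraticFunctions

variable {V W : Type*} [AddCommGroup V] [Module ℝ V] [AddCommGroup W] [Module ℝ W]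

def HasQuadraticPart (q : V → ℝ) (Q : QuadraticForm ℝ V) : Prop :=
  ∃ (ℓ : V →ₗ[ℝ] ℝ) (c : ℝ), ∀ x, q x = Q x + ℓ x + c

def LiesOnQuadric (S : Set V) : Prop :=
  ∃ (q : V → ℝ) (Q : QuadraticForm ℝ V), HasQuadraticPart q Q ∧ Q ≠ 0 ∧ ∀ x ∈ S, q x = 0

namespace HasQuadraticPart

variable {q p : V → ℝ} {Q P : QuadraticForm ℝ V}

lemma add (hq : HasQuadraticPart q Q) (hp : HasQuadraticPart p P) :
    HasQuadraticPart (q + p) (Q + P) := by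
  obtain ⟨ℓ, c, hq⟩ := hq
  obtain ⟨m, d, hp⟩ := hp
  refine ⟨ℓ + m, c + d, fun x => ?_⟩
  simp only [Pi.add_apply, hq, hp, add_apply, LinearMap.add_apply]
  ring

lemma smul (a : ℝ) (hq : HasQuadraticPart q Q) : HasQuadraticPart (a • q) (a • Q) := by
  obtain ⟨ℓ, c, hq⟩ := hq
  refine ⟨a • ℓ, a * c, fun x => ?_⟩
  simp only [Pi.smul_apply, hq, smul_apply, LinearMap.smul_apply, smul_eq_mul]
  ring

lemma sub (hq : HasQuadraticPart q Q) (hp : HasQuadraticPart p P) :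
    HasQuadraticPart (q - p) (Q - P) := by
  rw [sub_eq_add_neg, sub_eq_add_neg, ← neg_one_smul ℝ p, ← neg_one_smul ℝ P]
  exact hq.add (hp.smul (-1))

lemma sub_const (hq : HasQuadraticPart q Q) (c : ℝ) : HasQuadraticPart (fun x => q x - c) Q := by
  obtain ⟨ℓ, d, hq⟩ := hq
  exact ⟨ℓ, d - c, fun x => by simp only [hq]; ring⟩

lemma comp (hq : HasQuadraticPart q Q) (f : W →ᵃ[ℝ] V) :
    HasQuadraticPart (q ∘ f) (Q.comp f.linear) := by
  obtain ⟨ℓ, c, hq⟩ := hq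
  refine ⟨QuadraticMap.polarBilin Q (f 0) ∘ₗ f.linear + ℓ ∘ₗ f.linear, Q (f 0) + ℓ (f 0) + c,
    fun x => ?_⟩
  simp only [Function.comp_apply, hq, congrFun f.decomp x, Pi.add_apply, QuadraticMap.comp_apply,
    LinearMap.add_apply, LinearMap.comp_apply, QuadraticMap.polarBilin_apply_apply, map_add,
    QuadraticMap.map_add (⇑Q), QuadraticMap.polar_comm Q (f 0)]
  ring

lemma mul_affineMap (A B : V →ᵃ[ℝ] ℝ) :
    HasQuadraticPart (⇑A * ⇑B) (QuadraticMap.linMulLin A.linear B.linear) := by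
  refine ⟨B 0 • A.linear + A 0 • B.linear, A 0 * B 0, fun x => ?_⟩
  simp only [Pi.mul_apply, congrFun A.decomp x, congrFun B.decomp x, Pi.add_apply,
    QuadraticMap.linMulLin_apply, LinearMap.add_apply, LinearMap.smul_apply, smul_eq_mul]
  ring

lemma norm_sq {F : Type*} [NormedAddCommGroup F] [InnerProductSpace ℝ F] :
    HasQuadraticPart (fun y : F => ‖y‖ ^ 2) (LinearMap.BilinMap.toQuadraticMap (innerₗ F)) :=
  ⟨0, 0, fun y => by simp⟩

lemma eq_mul_one_sub_norm_sq_of_eq_zero_on_sphere {E : Type*} [NormedAddCommGroup E]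
    [NormedSpace ℝ E] {q : E → ℝ} {Q : QuadraticForm ℝ E} (hq : HasQuadraticPart q Q)
    (h : ∀ z, ‖z‖ = 1 → q z = 0) (x : E) : q x = q 0 * (1 - ‖x‖ ^ 2) := by
  obtain ⟨ℓ, c, hq⟩ := hq
  rcases eq_or_ne x 0 with rfl | hx
  · simp
  obtain ⟨r, z, hz, rfl⟩ : ∃ (r : ℝ) (z : E), ‖z‖ = 1 ∧ r • z = x :=
    ⟨‖x‖, ‖x‖⁻¹ • x, norm_smul_inv_norm hx, by simp [smul_smul, norm_ne_zero_iff.2 hx]⟩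
  have hpos := h z hz
  have hneg := h (-z) (by rwa [norm_neg])
  rw [hq] at hpos hneg
  rw [QuadraticMap.map_neg, map_neg] at hneg
  rw [hq, hq, QuadraticMap.map_smul, map_smul, smul_eq_mul, smul_eq_mul, norm_smul, hz,
    Real.norm_eq_abs, mul_one, sq_abs, QuadraticMap.map_zero, map_zero]
  linear_combination (r * r / 2) * (hpos + hneg) + (r / 2) * (hpos - hneg)

lemma exists_eq_mul_of_eq_zero {p : W → ℝ} {P : QuadraticForm ℝ W} (hp : HasQuadraticPart p P)
    (φ : W →ᵃ[ℝ] ℝ) (hφ : φ.linear ≠ 0) (h : ∀ y, φ y = 0 → p y = 0) :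
    ∃ ψ : W →ᵃ[ℝ] ℝ, ∀ y, p y = φ y * ψ y := by
  obtain ⟨ℓ, c, hp⟩ := hp
  obtain ⟨u, hu⟩ : ∃ u, φ.linear u = 1 := by
    obtain ⟨w, hw⟩ := DFunLike.ne_iff.1 hφ
    exact ⟨(φ.linear w)⁻¹ • w, by simp [inv_mul_cancel₀ hw]⟩
  have hφ_add : ∀ y v, φ (y + v) = φ y + φ.linear v := fun y v => by
    rw [add_comm y, ← vadd_eq_add, φ.map_vadd, vadd_eq_add, add_comm]
  -- `y - φ y • u` lies on `φ = 0`; expanding `p` there leaves `φ y` times an affine function.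
  refine ⟨((QuadraticMap.polarBilin P).flip u).toAffineMap - P u • φ +
    AffineMap.const ℝ W (ℓ u), fun y => ?_⟩
  have hy₀ := h (y + (-φ y) • u) (by simp [hφ_add, hu])
  rw [hp, QuadraticMap.map_add (⇑P), QuadraticMap.map_smul, QuadraticMap.polar_smul_right,
    map_add, map_smul] at hy₀
  simp only [hp, AffineMap.coe_add, AffineMap.coe_sub, AffineMap.coe_smul, AffineMap.coe_const,
    Pi.add_apply, Pi.sub_apply, Pi.smul_apply, Function.const_apply, LinearMap.coe_toAffineMap,
    LinearMap.flip_apply, QuadraticMap.polarBilin_apply_apply, smul_eq_mul] at hy₀ ⊢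
  linear_combination hy₀

lemma liesOnQuadric_insert (hp : HasQuadraticPart p P) {S : Set V} (hpS : ∀ x ∈ S, p x = 0)
    {A B : V →ᵃ[ℝ] ℝ} (hAB : ∀ x ∈ S, A x * B x = 0) {x₀ : V} (hA : A.linear x₀ = 0)
    (hP : P x₀ ≠ 0) {v : V} (hAv : A v ≠ 0) (hBv : B v ≠ 0) : LiesOnQuadric (insert v S) := by
  set t := -p v / (A v * B v)
  refine ⟨p + t • (⇑A * ⇑B), P + t • QuadraticMap.linMulLin A.linear B.linear,
    hp.add ((mul_affineMap A B).smul t), fun h0 => hP ?_, ?_⟩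
  · simpa [hA] using DFunLike.congr_fun h0 x₀
  rintro x (rfl | hx)
  · simp only [Pi.add_apply, Pi.smul_apply, Pi.mul_apply, smul_eq_mul, t]
    field_simp
    ring
  · simp [hpS x hx, hAB x hx]

end HasQuadraticPart

lemma liesOnQuadric_insert_of_forall_eq_zero {L : V →ᵃ[ℝ] ℝ} (hL : L.linear ≠ 0) {S : Set V}
    (hS : ∀ x ∈ S, L x = 0) (v : V) : LiesOnQuadric (insert v S) := by
  obtain ⟨w, hw⟩ := DFunLike.ne_iff.1 hL
  refine ⟨⇑L * ⇑(L - AffineMap.const ℝ V (L v)), _,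
    HasQuadraticPart.mul_affineMap L (L - AffineMap.const ℝ V (L v)), fun h0 => ?_, ?_⟩
  · exact hw (by simpa using DFunLike.congr_fun h0 w)
  · rintro x (rfl | hx) <;> simp [*]

end QuadraticFunctions

lemma affineSpan_sphere_eq_top {E : Type*} [NormedAddCommGroup E] [NormedSpace ℝ E]
    [Nontrivial E] : affineSpan ℝ (sphere (0 : E) 1) = ⊤ := by
  refine affineSpan_eq_top_of_nonempty_interior ⟨0, ?_⟩
  rw [convexHull_sphere_eq_closedBall _ zero_le_one, interior_closedBall _ one_ne_zero]
  exact mem_ball_self one_pos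

lemma AffineMap.eq_of_eqOn_sphere {E P : Type*} [NormedAddCommGroup E] [NormedSpace ℝ E]
    [Nontrivial E] [AddCommGroup P] [Module ℝ P] {f g : E →ᵃ[ℝ] P}
    (h : ∀ z, ‖z‖ = 1 → f z = g z) : f = g :=
  AffineMap.ext_on affineSpan_sphere_eq_top fun z hz => h z (mem_sphere_zero_iff_norm.1 hz)

lemma AffineMap.exists_leftInverse_of_injective {k V W : Type*} [Field k] [AddCommGroup V]
    [Module k V] [AddCommGroup W] [Module k W] {f : V →ᵃ[k] W} (hf : Function.Injective f) :
    ∃ g : W →ᵃ[k] V, ∀ y, g (f y) = y := by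
  obtain ⟨G, hG⟩ := f.linear.exists_leftInverse_of_injective
    (LinearMap.ker_eq_bot.2 (f.linear_injective_iff.2 hf))
  refine ⟨G.toAffineMap - AffineMap.const k W (G (f 0)), fun y => ?_⟩
  simp [congrFun f.decomp y, ← LinearMap.comp_apply, hG]

lemma AffineMap.not_forall_norm_eq_of_injective {E F : Type*} [AddCommGroup E] [Module ℝ E]
    [Nontrivial E] [NormedAddCommGroup F] [InnerProductSpace ℝ F] {e : E →ᵃ[ℝ] F}
    (he : Function.Injective e) (r : ℝ) : ¬ ∀ z, ‖e z‖ = r := by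
  intro h
  obtain ⟨z, hz⟩ := exists_ne (0 : E)
  have hpos : e z = e 0 + e.linear z := by rw [congrFun e.decomp z, add_comm]; rfl
  have hneg : e (-z) = e 0 - e.linear z := by
    rw [congrFun e.decomp (-z), sub_eq_add_neg, add_comm, ← map_neg]; rfl
  have hpar := parallelogram_law_with_norm ℝ (e 0) (e.linear z)
  rw [← hpos, ← hneg, h, h, h] at hpar
  have : e.linear z = 0 := by
    rw [← norm_eq_zero]; nlinarith [norm_nonneg (e.linear z)]
  exact hz (e.linear_injective_iff.2 he (this.trans (map_zero _).symm))

lemma AffineMap.mem_range_of_comp_eq_zero {k U W : Type*} [Field k] [AddCommGroup U]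
    [Module k U] [FiniteDimensional k U] [AddCommGroup W] [Module k W] [FiniteDimensional k W]
    {e : U →ᵃ[k] W} (he : Function.Injective e) {φ : W →ᵃ[k] k} (hφ : φ.linear ≠ 0)
    (hφe : φ.comp e = 0) (hdim : Module.finrank k W = Module.finrank k U + 1) {y : W}
    (hy : φ y = 0) : y ∈ range e := by
  have hle : LinearMap.range e.linear ≤ LinearMap.ker φ.linear := by
    rintro _ ⟨z, rfl⟩
    exact congrArg (fun F : U →ᵃ[k] k => F.linear z) hφe
  have heq := Submodule.eq_of_le_of_finrank_eq hle (by
    have := Module.Dual.finrank_ker_add_one_of_ne_zero hφ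
    rw [LinearMap.finrank_range_of_inj (e.linear_injective_iff.2 he)]
    omega)
  have hmem : y - e 0 ∈ LinearMap.ker φ.linear := by
    rw [LinearMap.mem_ker, ← vsub_eq_sub, φ.linearMap_vsub, hy,
      show φ (e 0) = 0 from congrArg (· 0) hφe]
    simp
  rw [← heq] at hmem
  obtain ⟨z, hz⟩ := hmem
  exact ⟨z, by rw [congrFun e.decomp z]; simp [hz]⟩

lemma AffineMap.exists_comp_eq_of_image_sphere_subset {U W V : Type*} [NormedAddCommGroup U]
    [NormedSpace ℝ U] [Nontrivial U] [NormedAddCommGroup W] [NormedSpace ℝ W] [AddCommGroup V]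
    [Module ℝ V] {f : W →ᵃ[ℝ] V} (hf : Function.Injective f) {g : U →ᵃ[ℝ] V}
    (hg : Function.Injective g) (hfg : g '' sphere 0 1 ⊆ f '' sphere 0 1) :
    ∃ e : U →ᵃ[ℝ] W, f.comp e = g ∧ Function.Injective e ∧ ∀ z, ‖z‖ = 1 → ‖e z‖ = 1 := by
  obtain ⟨f', hf'⟩ := AffineMap.exists_leftInverse_of_injective hf
  have hsphere : ∀ z, ‖z‖ = 1 → ∃ y, ‖y‖ = 1 ∧ f y = g z := fun z hz => by
    simpa using hfg ⟨z, mem_sphere_zero_iff_norm.2 hz, rfl⟩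
  have hfe : f.comp (f'.comp g) = g := AffineMap.eq_of_eqOn_sphere fun z hz => by
    obtain ⟨y, -, hy⟩ := hsphere z hz
    simp [← hy, hf']
  refine ⟨f'.comp g, hfe, fun a b hab => hg ?_, fun z hz => ?_⟩
  · rw [← hfe, AffineMap.coe_comp, Function.comp_apply, hab, ← Function.comp_apply (f := f),
      ← AffineMap.coe_comp]
  · obtain ⟨y, hy, hyz⟩ := hsphere z hz
    simp [← hyz, hf', hy]

section Ellipsoids

variable {V U W : Type*} [AddCommGroup V] [Module ℝ V] [NormedAddCommGroup U] [NormedSpace ℝ U]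
  [Nontrivial U] [FiniteDimensional ℝ U] [NormedAddCommGroup W] [InnerProductSpace ℝ W]
  [FiniteDimensional ℝ W]

lemma HasQuadraticPart.exists_mul_eq_mul_norm_sq_sub_one_add_mul {p : W → ℝ}
    {P : QuadraticForm ℝ W} (hp : HasQuadraticPart p P)
    (hdim : Module.finrank ℝ W = Module.finrank ℝ U + 1) {e : U →ᵃ[ℝ] W}
    (he : Function.Injective e) (he_sphere : ∀ z, ‖z‖ = 1 → ‖e z‖ = 1) {φ : W →ᵃ[ℝ] ℝ}
    (hφ : φ.linear ≠ 0) (hφe : φ.comp e = 0) (hpe : ∀ z, ‖z‖ = 1 → p (e z) = 0) :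
    ∃ a ≠ 0, ∃ (b : ℝ) (ψ : W →ᵃ[ℝ] ℝ), ∀ y, a * p y = b * (‖y‖ ^ 2 - 1) + φ y * ψ y := by
  have hS := (HasQuadraticPart.norm_sq (F := W)).sub_const 1
  have hpe' := (hp.comp e).eq_mul_one_sub_norm_sq_of_eq_zero_on_sphere hpe
  have hSe' := (hS.comp e).eq_mul_one_sub_norm_sq_of_eq_zero_on_sphere fun z hz => by
    simp [he_sphere z hz]
  simp only [Function.comp_apply] at hpe' hSe'
  have ha : ‖e 0‖ ^ 2 - 1 ≠ 0 := fun ha =>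
    e.not_forall_norm_eq_of_injective he 1 fun z => by
      have := hSe' z
      rwa [ha, zero_mul, sub_eq_zero, pow_eq_one_iff_of_nonneg (norm_nonneg _) two_ne_zero]
        at this
  obtain ⟨ψ, hψ⟩ := ((hp.smul (‖e 0‖ ^ 2 - 1)).sub (hS.smul (p (e 0)))).exists_eq_mul_of_eq_zero
    φ hφ fun y hy => by
      obtain ⟨z, rfl⟩ := AffineMap.mem_range_of_comp_eq_zero he hφ hφe hdim hy
      simp only [Pi.sub_apply, Pi.smul_apply, smul_eq_mul, hpe' z, hSe' z]
      ring
  refine ⟨_, ha, p (e 0), ψ, fun y => ?_⟩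
  have := hψ y
  simp only [Pi.sub_apply, Pi.smul_apply, smul_eq_mul] at this
  linear_combination this

variable {f₁ f₂ : W →ᵃ[ℝ] V} {f₃ : U →ᵃ[ℝ] V}

lemma exists_hasQuadraticPart_eq_zero_on_union_image_sphere
    (hdim : Module.finrank ℝ W = Module.finrank ℝ U + 1) (hf₁ : Function.Injective f₁)
    (hf₂ : Function.Injective f₂) (hf₃ : Function.Injective f₃)
    (h₃ : f₃ '' sphere 0 1 ⊆ f₁ '' sphere 0 1 ∩ f₂ '' sphere 0 1) {L₁ : V →ᵃ[ℝ] ℝ}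
    (hE₁ : ∀ x ∈ f₁ '' sphere 0 1, L₁ x = 0) (hE₂ : ¬ ∀ x ∈ f₂ '' sphere 0 1, L₁ x = 0) :
    ∃ (p : V → ℝ) (P : QuadraticForm ℝ V) (x₀ : V), HasQuadraticPart p P ∧
      L₁.linear x₀ = 0 ∧ P x₀ ≠ 0 ∧ ∀ x ∈ f₁ '' sphere 0 1 ∪ f₂ '' sphere 0 1, p x = 0 := by
  have : Nontrivial W := Module.nontrivial_of_finrank_eq_succ hdim
  obtain ⟨g₁, hg₁⟩ := AffineMap.exists_leftInverse_of_injective hf₁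
  obtain ⟨g₂, hg₂⟩ := AffineMap.exists_leftInverse_of_injective hf₂
  obtain ⟨e, hfe, he, he_sphere⟩ :=
    f₂.exists_comp_eq_of_image_sphere_subset hf₂ hf₃ (h₃.trans inter_subset_right)
  have hL₁f₁ : L₁.comp f₁ = 0 := AffineMap.eq_of_eqOn_sphere fun y hy =>
    hE₁ _ ⟨y, mem_sphere_zero_iff_norm.2 hy, rfl⟩
  have hL₁f₃ : L₁.comp f₃ = 0 := AffineMap.eq_of_eqOn_sphere fun z hz =>
    hE₁ _ (h₃ ⟨z, mem_sphere_zero_iff_norm.2 hz, rfl⟩).1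
  have hφe : (L₁.comp f₂).comp e = 0 := by rw [AffineMap.comp_assoc, hfe, hL₁f₃]
  have hφ : (L₁.comp f₂).linear ≠ 0 := fun h0 => hE₂ <| by
    obtain ⟨c, hc⟩ := (L₁.comp f₂).linear_eq_zero_iff_exists_const.1 h0
    have hc0 : c = 0 := by simpa [hc] using congrArg (· 0) hφe
    rintro _ ⟨y, -, rfl⟩
    simpa [hc0] using congrArg (· y) hc
  have hpe : ∀ z : U, ‖z‖ = 1 → ‖g₁ (f₂ (e z))‖ ^ 2 - 1 = 0 := fun z hz => by
    obtain ⟨y, hy, hyz⟩ := (h₃ ⟨z, mem_sphere_zero_iff_norm.2 hz, rfl⟩).1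
    rw [← AffineMap.comp_apply f₂, hfe, ← hyz, hg₁, mem_sphere_zero_iff_norm.1 hy]
    norm_num
  obtain ⟨a, ha, b, ψ, hψ⟩ := ((HasQuadraticPart.norm_sq.comp (g₁.comp f₂)).sub_const 1
    ).exists_mul_eq_mul_norm_sq_sub_one_add_mul hdim he he_sphere hφ hφe hpe
  have hg₁f₁ : g₁.comp f₁ = AffineMap.id ℝ W := AffineMap.ext hg₁
  obtain ⟨y₀, hy₀⟩ := exists_ne (0 : W)
  have hx₀ : L₁.linear (f₁.linear y₀) = 0 := congrArg (fun F : W →ᵃ[ℝ] ℝ => F.linear y₀) hL₁f₁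
  have hy₀' : g₁.linear (f₁.linear y₀) = y₀ := congrArg (fun F : W →ᵃ[ℝ] W => F.linear y₀) hg₁f₁
  refine ⟨fun x => a * (‖g₁ x‖ ^ 2 - 1) - L₁ x * ψ (g₂ x), _, f₁.linear y₀,
    (((HasQuadraticPart.norm_sq.comp g₁).sub_const 1).smul a).sub
      (HasQuadraticPart.mul_affineMap L₁ (ψ.comp g₂)), hx₀, by simp [hx₀, hy₀', ha, hy₀], ?_⟩
  rintro _ (⟨y, hy, rfl⟩ | ⟨y, hy, rfl⟩)
  · simp [hg₁, mem_sphere_zero_iff_norm.1 hy, hE₁ _ ⟨y, hy, rfl⟩]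
  · have := hψ y
    simp only [Function.comp_apply, AffineMap.coe_comp, mem_sphere_zero_iff_norm.1 hy] at this ⊢
    rw [hg₂]
    linear_combination this

theorem liesOnQuadric_insert_union_image_sphere
    (hdim : Module.finrank ℝ W = Module.finrank ℝ U + 1) (hf₁ : Function.Injective f₁)
    (hf₂ : Function.Injective f₂) (hf₃ : Function.Injective f₃)
    (h₃ : f₃ '' sphere 0 1 ⊆ f₁ '' sphere 0 1 ∩ f₂ '' sphere 0 1) {L₁ L₂ : V →ᵃ[ℝ] ℝ}
    (hL₁ : L₁.linear ≠ 0) (hE₁ : ∀ x ∈ f₁ '' sphere 0 1, L₁ x = 0)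
    (hE₂ : ∀ x ∈ f₂ '' sphere 0 1, L₂ x = 0) {v : V} (hv₁ : L₁ v ≠ 0) (hv₂ : L₂ v ≠ 0) :
    LiesOnQuadric (insert v (f₁ '' sphere 0 1 ∪ f₂ '' sphere 0 1)) := by
  by_cases hE₂₁ : ∀ x ∈ f₂ '' sphere 0 1, L₁ x = 0
  · exact liesOnQuadric_insert_of_forall_eq_zero hL₁ (fun x hx => hx.elim (hE₁ x) (hE₂₁ x)) v
  obtain ⟨p, P, x₀, hp, hx₀, hPx₀, hpE⟩ :=
    exists_hasQuadraticPart_eq_zero_on_union_image_sphere hdim hf₁ hf₂ hf₃ h₃ hE₁ hE₂₁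
  refine hp.liesOnQuadric_insert hpE (fun x hx => ?_) hx₀ hPx₀ hv₁ hv₂
  rcases hx with hx | hx <;> simp [hE₁ x, hE₂ x, hx]

end Ellipsoids

lemma QuadraticForm.apply_eq_sum_toMatrix {n : ℕ} (Q : QuadraticForm ℝ (En n)) (x : En n) :
    Q x = ∑ i, ∑ k, Q.toMatrix (EuclideanSpace.basisFun (Fin n) ℝ).toBasis i k * x i * x k := by
  set b := (EuclideanSpace.basisFun (Fin n) ℝ).toBasis
  have h := Matrix.toLinearMap₂_apply b b (Q.toMatrix b) x x
  rw [QuadraticForm.toMatrix, Matrix.toLinearMap₂_toMatrix₂,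
    QuadraticMap.associated_eq_self_apply] at h
  rw [h]
  simp only [b, OrthonormalBasis.coe_toBasis_repr_apply, EuclideanSpace.basisFun_repr,
    smul_eq_mul]
  exact Finset.sum_congr rfl fun i _ => Finset.sum_congr rfl fun k _ => by
    rw [QuadraticForm.toMatrix]; ring

lemma LinearMap.apply_eq_sum_single_mul {n : ℕ} (ℓ : En n →ₗ[ℝ] ℝ) (x : En n) :
    ℓ x = ∑ i, ℓ (EuclideanSpace.single i 1) * x i := by
  conv_lhs => rw [← (EuclideanSpace.basisFun (Fin n) ℝ).sum_repr x]
  simp [mul_comm]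

lemma LiesOnQuadric.exists_isRealQuadricSurface {n : ℕ} {S : Set (En n)} (h : LiesOnQuadric S)
    (hS : S.Nonempty) : ∃ Q : Set (En n), IsRealQuadricSurface Q ∧ S ⊆ Q := by
  obtain ⟨q, Q, ⟨ℓ, c, hq⟩, hQ, hqS⟩ := h
  set b := (EuclideanSpace.basisFun (Fin n) ℝ).toBasis
  refine ⟨{x | q x = 0}, ⟨⟨Q.toMatrix b, fun i => ℓ (EuclideanSpace.single i 1) / 2, c,
    Q.isSymm_toMatrix b, fun h0 => hQ ?_, ?_⟩, hS.mono hqS⟩, hqS⟩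
  · ext x
    simp [Q.apply_eq_sum_toMatrix, b, h0]
  · ext x
    simp only [mem_ofPred_eq, hq, Q.apply_eq_sum_toMatrix, ℓ.apply_eq_sum_single_mul x, b]
    rw [Finset.mul_sum]
    simp only [div_eq_mul_inv]
    ring_nf

lemma exists_affineMap_eq_zero_iff_inner_eq {E : Type*} [NormedAddCommGroup E]
    [InnerProductSpace ℝ E] {v : E} (hv : v ≠ 0) (c : ℝ) :
    ∃ L : E →ᵃ[ℝ] ℝ, L.linear ≠ 0 ∧ ∀ x, L x = 0 ↔ ⟪x, v⟫ = c := by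
  refine ⟨(innerₛₗ ℝ v).toAffineMap - AffineMap.const ℝ E c, fun h0 => ?_, fun x => ?_⟩
  · simpa [hv] using DFunLike.congr_fun h0 v
  · simp [real_inner_comm, sub_eq_zero]

/-- Lemma 10: if E₁, E₂ are (n−1)-dimensional ellipsoids lying in
hyperplanes H₁, H₂ of ℝⁿ (n ≥ 3) whose intersection E₁ ∩ E₂ is an (n−2)-dimensional
ellipsoid, then for every point v outside H₁ ∪ H₂ there is a real quadric surface
containing {v} ∪ E₁ ∪ E₂. -/
theorem quadric_through_point_and_two_ellipsoids
    {n : ℕ} (hn : 3 ≤ n) (H₁ H₂ E₁ E₂ : Set (En n))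
    (hH₁ : ∃ (v : En n) (c : ℝ), v ≠ 0 ∧ H₁ = {x : En n | ⟪x, v⟫ = c})
    (hH₂ : ∃ (v : En n) (c : ℝ), v ≠ 0 ∧ H₂ = {x : En n | ⟪x, v⟫ = c})
    (hE₁ : IsEllipsoidDim (n - 1) E₁) (hE₂ : IsEllipsoidDim (n - 1) E₂)
    (hE₁H : E₁ ⊆ H₁) (hE₂H : E₂ ⊆ H₂)
    (hEE : IsEllipsoidDim (n - 2) (E₁ ∩ E₂)) :
    ∀ v : En n, v ∉ H₁ ∪ H₂ →
      ∃ Q : Set (En n), IsRealQuadricSurface Q ∧ insert v (E₁ ∪ E₂) ⊆ Q := by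
  obtain ⟨v₁, c₁, hv₁, rfl⟩ := hH₁
  obtain ⟨v₂, c₂, hv₂, rfl⟩ := hH₂
  obtain ⟨L₁, hL₁, hL₁H⟩ := exists_affineMap_eq_zero_iff_inner_eq hv₁ c₁
  obtain ⟨L₂, -, hL₂H⟩ := exists_affineMap_eq_zero_iff_inner_eq hv₂ c₂
  obtain ⟨f₁, hf₁, rfl⟩ := hE₁
  obtain ⟨f₂, hf₂, rfl⟩ := hE₂
  obtain ⟨f₃, hf₃, hE₃⟩ := hEE
  have : Nontrivial (En (n - 2)) :=
    Module.nontrivial_of_finrank_eq_succ (R := ℝ) (n := n - 3)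
      (by rw [finrank_euclideanSpace_fin]; omega)
  intro v hv
  simp only [mem_union, mem_ofPred_eq, not_or] at hv
  refine LiesOnQuadric.exists_isRealQuadricSurface ?_ (insert_nonempty _ _)
  exact liesOnQuadric_insert_union_image_sphere
    (by simp only [finrank_euclideanSpace_fin]; omega) hf₁ hf₂ hf₃ hE₃.symm.subset hL₁
    (fun x hx => (hL₁H x).2 (hE₁H hx)) (fun x hx => (hL₂H x).2 (hE₂H hx))
    (fun h => hv.1 ((hL₁H v).1 h)) (fun h => hv.2 ((hL₂H v).1 h))
end
end
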